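/- arXiv:2409.05184 — 7 statements merged into one kernel-verified Lean document; each statement's English description precedes it below -/
import Mathlib

section
/- Let g¹ ∈ {2,…,T} and t ∈ {g¹,…,T} with P(G¹=g¹) > 0 and P(D¹_t=0) > 0, and set b := g¹−1. Under No Anticipation, Homogeneous effects, and the Baseline parallel trend, if additionally there is no interaction, i.e. A = A¹ + A², then ATT^CS(g¹,t) = ATT¹(g¹,t) + Γ₁₂(g¹,t)·A², where Γ₁₂(g¹,t) := P(D²_t=1, D²_b=0 | G¹=g¹) − P(D²_t=1, D²_b=0 | D¹_t=0) is the confoundedness diagnostic. -/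
/- Two-event staggered Difference-in-Differences setup (Callaway–Sant'Anna with a
confounding event).  Cohorts take values in `{2,…,T} ∪ {∞} ⊆ ℕ∞`; the potential-outcome
index `0 : ℕ∞` codes "never treated by that event". -/

open MeasureTheory ProbabilityTheory

noncomputable section

namespace TwoEventDiD

variable {Ω : Type*} [MeasurableSpace Ω]

/-- Expectation of `Z` conditional on the event `A`: `E[Z | A]`. -/
def cE (μ : Measure Ω) (A : Set Ω) (Z : Ω → ℝ) : ℝ := ∫ ω, Z ω ∂(μ[|A])

/-- Probability of `B` conditional on the event `A`: `P(B | A)`. -/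
def cP (μ : Measure Ω) (A B : Set Ω) : ℝ := (μ[|A] B).toReal

/-- `g` lies in `{2,…,T} ∪ {∞}`. -/
def InCohort (T : ℕ) (g : ℕ∞) : Prop := g = ⊤ ∨ ((2 : ℕ∞) ≤ g ∧ g ≤ (T : ℕ∞))

/-- Realized outcome `Y_t := Y_t(G¹,G²)`. -/
def Yr (G1 G2 : Ω → ℕ∞) (Y : ℕ → ℕ∞ → ℕ∞ → Ω → ℝ) (t : ℕ) : Ω → ℝ :=
  fun ω => Y t (G1 ω) (G2 ω) ω

/-- Double-group-time average treatment effect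
`ATT(g¹,g²,t) = E[Y_t(g¹,g²) − Y_t(0,0) | G¹=g¹, G²=g²]`. -/
def ATT (μ : Measure Ω) (G1 G2 : Ω → ℕ∞) (Y : ℕ → ℕ∞ → ℕ∞ → Ω → ℝ)
    (g1 g2 : ℕ∞) (t : ℕ) : ℝ :=
  cE μ {ω | G1 ω = g1 ∧ G2 ω = g2} fun ω => Y t g1 g2 ω - Y t 0 0 ω

/-- Target (event-1) treatment effect
`ATT¹(g¹,g²,t) = E[Y_t(g¹,0) − Y_t(0,0) | G¹=g¹, G²=g²]`. -/
def ATT1 (μ : Measure Ω) (G1 G2 : Ω → ℕ∞) (Y : ℕ → ℕ∞ → ℕ∞ → Ω → ℝ)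
    (g1 g2 : ℕ∞) (t : ℕ) : ℝ :=
  cE μ {ω | G1 ω = g1 ∧ G2 ω = g2} fun ω => Y t g1 0 ω - Y t 0 0 ω

/-- Confounding (event-2) treatment effect
`ATT²(g¹,g²,t) = E[Y_t(0,g²) − Y_t(0,0) | G¹=g¹, G²=g²]`. -/
def ATT2 (μ : Measure Ω) (G1 G2 : Ω → ℕ∞) (Y : ℕ → ℕ∞ → ℕ∞ → Ω → ℝ)
    (g1 g2 : ℕ∞) (t : ℕ) : ℝ :=
  cE μ {ω | G1 ω = g1 ∧ G2 ω = g2} fun ω => Y t 0 g2 ω - Y t 0 0 ω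

/-- No Anticipation (unconditional version): before `max(g¹,g²)` the mean outcome of
cohort `(g¹,g²)` coincides with the appropriate less-treated potential outcome. -/
def NoAnticipation (μ : Measure Ω) (G1 G2 : Ω → ℕ∞) (Y : ℕ → ℕ∞ → ℕ∞ → Ω → ℝ)
    (T : ℕ) : Prop :=
  ∀ g1 g2 : ℕ∞, InCohort T g1 → InCohort T g2 →
    0 < μ {ω | G1 ω = g1 ∧ G2 ω = g2} →
    ∀ t : ℕ, 1 ≤ t → (t : ℕ∞) < max g1 g2 →
      ((t : ℕ∞) < min g1 g2 →
        cE μ {ω | G1 ω = g1 ∧ G2 ω = g2} (Y t g1 g2)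
          = cE μ {ω | G1 ω = g1 ∧ G2 ω = g2} (Y t 0 0)) ∧
      (g1 ≤ (t : ℕ∞) ∧ (t : ℕ∞) < g2 →
        cE μ {ω | G1 ω = g1 ∧ G2 ω = g2} (Y t g1 g2)
          = cE μ {ω | G1 ω = g1 ∧ G2 ω = g2} (Y t g1 0)) ∧
      (g2 ≤ (t : ℕ∞) ∧ (t : ℕ∞) < g1 →
        cE μ {ω | G1 ω = g1 ∧ G2 ω = g2} (Y t g1 g2)
          = cE μ {ω | G1 ω = g1 ∧ G2 ω = g2} (Y t 0 g2))

end TwoEventDiD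

open TwoEventDiD

/-! Cut the population into the cells `{G¹ = γ¹, G² = γ²}`. On a cell the realized outcome
is `Y_s(γ¹,γ²)`, and No Anticipation together with the homogeneous, non-interacting effects
shows that its mean exceeds that of `Y_s(0,0)` by `A¹·1{γ¹ ≤ s} + A²·1{γ² ≤ s}`. Summing over
the cells of any event determined by the cohorts, `Y_s − Y_s(0,0)` integrates like
`τ_s := A¹ D¹_s + A² D²_s`, so between `b` and `t` the realized change exceeds the untreated
change by `A¹` on the cohorts newly treated by event 1 and by `A²` on those newly treated by
event 2. The treated cohort `G¹ = g¹` collects the first term in full, the not-yet-treated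
comparison group none of it; parallel trends cancel the untreated changes, and what remains is
`ATT¹(g¹,t) + Γ₁₂(g¹,t)·A²`. -/

namespace TwoEventDiD

variable {Ω : Type*} {T : ℕ} {G1 G2 : Ω → ℕ∞} {Y : ℕ → ℕ∞ → ℕ∞ → Ω → ℝ} {A1 A2 A : ℝ}

lemma preimage_cohorts_singleton (γ1 γ2 : ℕ∞) :
    (fun ω => (G1 ω, G2 ω)) ⁻¹' {(γ1, γ2)} = {ω | G1 ω = γ1 ∧ G2 ω = γ2} := by
  ext ω; simp

def homogeneousEffect (A1 A2 : ℝ) (G1 G2 : Ω → ℕ∞) (s : ℕ) : Ω → ℝ :=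
  {ω | G1 ω ≤ s}.indicator (fun _ => A1) + {ω | G2 ω ≤ s}.indicator (fun _ => A2)

lemma homogeneousEffect_sub {b t : ℕ} (hbt : b ≤ t) :
    homogeneousEffect A1 A2 G1 G2 t - homogeneousEffect A1 A2 G1 G2 b
      = {ω | G1 ω ≤ t ∧ ¬ G1 ω ≤ b}.indicator (fun _ => A1)
        + {ω | G2 ω ≤ t ∧ ¬ G2 ω ≤ b}.indicator (fun _ => A2) := by
  have hbt' : (b : ℕ∞) ≤ t := by exact_mod_cast hbt
  funext ω
  simp only [homogeneousEffect, Pi.add_apply, Pi.sub_apply, Set.indicator_apply]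
  split_ifs <;> grind

variable [MeasurableSpace Ω] {μ : Measure Ω}

lemma cE_eq_inv_mul_setIntegral (A : Set Ω) (Z : Ω → ℝ) :
    cE μ A Z = (μ.real A)⁻¹ * ∫ ω in A, Z ω ∂μ := by
  simp [cE, ProbabilityTheory.cond, integral_smul_measure, measureReal_def, ENNReal.toReal_inv]

lemma cP_eq_inv_mul_measureReal {A : Set Ω} (hA : MeasurableSet A) (B : Set Ω) :
    cP μ A B = (μ.real A)⁻¹ * μ.real (A ∩ B) := by
  simp [cP, cond_apply hA, measureReal_def, ENNReal.toReal_mul, ENNReal.toReal_inv]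

lemma cE_sub {A : Set Ω} {f g : Ω → ℝ} (hf : Integrable f μ) (hg : Integrable g μ) :
    cE μ A (fun ω => f ω - g ω) = cE μ A f - cE μ A g := by
  simp only [cE_eq_inv_mul_setIntegral, integral_sub hf.integrableOn hg.integrableOn, mul_sub]

lemma setIntegral_eq_measureReal_mul_of_cE_eq [IsFiniteMeasure μ] {A : Set Ω} {Z : Ω → ℝ}
    {c : ℝ} (h : 0 < μ A → cE μ A Z = c) : ∫ ω in A, Z ω ∂μ = μ.real A * c := by
  rcases eq_zero_or_pos (μ A) with hA | hA
  · simp [Measure.restrict_eq_zero.mpr hA, measureReal_def, hA]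
  · rw [← h hA, cE_eq_inv_mul_setIntegral,
      mul_inv_cancel_left₀ ((measureReal_ne_zero_iff).2 hA.ne')]

lemma setIntegral_preimage_eq_of_fibers {α : Type*} [MeasurableSpace α] [Countable α]
    [MeasurableSingletonClass α] {L : Ω → α} (hL : Measurable L) {f g : Ω → ℝ}
    (hf : Integrable f μ) (hg : Integrable g μ) {S : Set α}
    (hfg : ∀ a ∈ S, ∫ ω in L ⁻¹' {a}, f ω ∂μ = ∫ ω in L ⁻¹' {a}, g ω ∂μ) :
    ∫ ω in L ⁻¹' S, f ω ∂μ = ∫ ω in L ⁻¹' S, g ω ∂μ := by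
  have hS : L ⁻¹' S = ⋃ a, L ⁻¹' (S ∩ {a}) := by ext ω; simp
  have hm : ∀ a, MeasurableSet (L ⁻¹' (S ∩ {a})) := fun a => hL (Set.to_countable _).measurableSet
  have hd : Pairwise (Function.onFun Disjoint fun a => L ⁻¹' (S ∩ {a})) := fun a a' haa' =>
    ((Set.disjoint_singleton.2 haa').mono Set.inter_subset_right Set.inter_subset_right).preimage L
  rw [hS, integral_iUnion hm hd hf.integrableOn, integral_iUnion hm hd hg.integrableOn]
  refine tsum_congr fun a => ?_
  by_cases ha : a ∈ S
  · rw [Set.inter_eq_right.2 (Set.singleton_subset_iff.2 ha), hfg a ha]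
  · simp [Set.inter_singleton_eq_empty.2 ha]

lemma finite_setOf_inCohort (T : ℕ) : {g | InCohort T g}.Finite := by
  refine (((Set.finite_Iic T).image ((↑) : ℕ → ℕ∞)).insert ⊤).subset ?_
  rintro g (rfl | ⟨-, hgT⟩)
  · exact Set.mem_insert _ _
  · lift g to ℕ using ne_top_of_le_ne_top (ENat.natCast_ne_top T) hgT
    exact Or.inr ⟨g, by exact_mod_cast hgT, rfl⟩

structure HomogeneousEffects (μ : Measure Ω) (G1 G2 : Ω → ℕ∞) (Y : ℕ → ℕ∞ → ℕ∞ → Ω → ℝ)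
    (T : ℕ) (A1 A2 A : ℝ) : Prop where
  att1 : ∀ (g1 g2 : ℕ∞) (t : ℕ), InCohort T g1 → InCohort T g2 →
    0 < μ {ω | G1 ω = g1 ∧ G2 ω = g2} → g1 ≤ (t : ℕ∞) → ATT1 μ G1 G2 Y g1 g2 t = A1
  att2 : ∀ (g1 g2 : ℕ∞) (t : ℕ), InCohort T g1 → InCohort T g2 →
    0 < μ {ω | G1 ω = g1 ∧ G2 ω = g2} → g2 ≤ (t : ℕ∞) → ATT2 μ G1 G2 Y g1 g2 t = A2
  att : ∀ (g1 g2 : ℕ∞) (t : ℕ), InCohort T g1 → InCohort T g2 →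
    0 < μ {ω | G1 ω = g1 ∧ G2 ω = g2} → g1 ≤ (t : ℕ∞) → g2 ≤ (t : ℕ∞) →
    ATT μ G1 G2 Y g1 g2 t = A

lemma inCohort_of_cell_pos (hG1mem : ∀ ω, InCohort T (G1 ω)) (hG2mem : ∀ ω, InCohort T (G2 ω))
    {γ1 γ2 : ℕ∞} (hpos : 0 < μ {ω | G1 ω = γ1 ∧ G2 ω = γ2}) :
    InCohort T γ1 ∧ InCohort T γ2 := by
  obtain ⟨ω, rfl, rfl⟩ := nonempty_of_measure_ne_zero hpos.ne'
  exact ⟨hG1mem ω, hG2mem ω⟩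

lemma integrable_Yr (hG1 : Measurable G1) (hG2 : Measurable G2)
    (hG1mem : ∀ ω, InCohort T (G1 ω)) (hG2mem : ∀ ω, InCohort T (G2 ω))
    (hYint : ∀ (t : ℕ) (g1 g2 : ℕ∞), Integrable (Y t g1 g2) μ) (s : ℕ) :
    Integrable (Yr G1 G2 Y s) μ := by
  set L := fun ω => (G1 ω, G2 ω)
  have hfin : (Set.range L).Finite :=
    ((finite_setOf_inCohort T).prod (finite_setOf_inCohort T)).subset <| by
      rintro _ ⟨ω, rfl⟩
      exact ⟨hG1mem ω, hG2mem ω⟩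
  rw [← integrableOn_univ, ← Set.preimage_range L, ← Set.biUnion_preimage_singleton,
    integrableOn_finite_biUnion hfin]
  rintro ⟨γ1, γ2⟩ -
  rw [preimage_cohorts_singleton]
  refine (hYint s γ1 γ2).integrableOn.congr_fun (fun ω ⟨h1, h2⟩ => by simp [Yr, h1, h2]) ?_
  exact (hG1 (measurableSet_singleton γ1)).inter (hG2 (measurableSet_singleton γ2))

lemma integrable_homogeneousEffect [IsFiniteMeasure μ] (hG1 : Measurable G1)
    (hG2 : Measurable G2) (s : ℕ) : Integrable (homogeneousEffect A1 A2 G1 G2 s) μ :=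
  ((integrable_const A1).indicator (hG1 .of_discrete)).add
    ((integrable_const A2).indicator (hG2 .of_discrete))

lemma cE_cell_eq_effects (hYint : ∀ (t : ℕ) (g1 g2 : ℕ∞), Integrable (Y t g1 g2) μ)
    (hNA : NoAnticipation μ G1 G2 Y T) (hH : HomogeneousEffects μ G1 G2 Y T A1 A2 A)
    (hadd : A = A1 + A2) {γ1 γ2 : ℕ∞} (h1 : InCohort T γ1) (h2 : InCohort T γ2)
    (hpos : 0 < μ {ω | G1 ω = γ1 ∧ G2 ω = γ2}) {s : ℕ} (hs : 1 ≤ s) :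
    cE μ {ω | G1 ω = γ1 ∧ G2 ω = γ2} (fun ω => Y s γ1 γ2 ω - Y s 0 0 ω)
      = (if γ1 ≤ (s : ℕ∞) then A1 else 0) + (if γ2 ≤ (s : ℕ∞) then A2 else 0) := by
  have hNAs := hNA γ1 γ2 h1 h2 hpos s hs
  by_cases h1s : γ1 ≤ (s : ℕ∞) <;> by_cases h2s : γ2 ≤ (s : ℕ∞)
  · rw [if_pos h1s, if_pos h2s, ← hadd]
    exact hH.att γ1 γ2 s h1 h2 hpos h1s h2s
  · have h2s' := not_le.1 h2s
    rw [if_pos h1s, if_neg h2s, add_zero, cE_sub (hYint _ _ _) (hYint _ _ _),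
      (hNAs (lt_max_of_lt_right h2s')).2.1 ⟨h1s, h2s'⟩, ← cE_sub (hYint _ _ _) (hYint _ _ _)]
    exact hH.att1 γ1 γ2 s h1 h2 hpos h1s
  · have h1s' := not_le.1 h1s
    rw [if_neg h1s, if_pos h2s, zero_add, cE_sub (hYint _ _ _) (hYint _ _ _),
      (hNAs (lt_max_of_lt_left h1s')).2.2 ⟨h2s, h1s'⟩, ← cE_sub (hYint _ _ _) (hYint _ _ _)]
    exact hH.att2 γ1 γ2 s h1 h2 hpos h2s
  · have h1s' := not_le.1 h1s
    rw [if_neg h1s, if_neg h2s, cE_sub (hYint _ _ _) (hYint _ _ _),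
      (hNAs (lt_max_of_lt_left h1s')).1 (lt_min h1s' (not_le.1 h2s)), sub_self, add_zero]

lemma setIntegral_Yr_sub_untreated [IsFiniteMeasure μ] (hG1 : Measurable G1)
    (hG2 : Measurable G2) (hG1mem : ∀ ω, InCohort T (G1 ω)) (hG2mem : ∀ ω, InCohort T (G2 ω))
    (hYint : ∀ (t : ℕ) (g1 g2 : ℕ∞), Integrable (Y t g1 g2) μ)
    (hNA : NoAnticipation μ G1 G2 Y T) (hH : HomogeneousEffects μ G1 G2 Y T A1 A2 A)
    (hadd : A = A1 + A2) (p : ℕ∞ → ℕ∞ → Prop) {s : ℕ} (hs : 1 ≤ s) :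
    ∫ ω in {ω | p (G1 ω) (G2 ω)}, (Yr G1 G2 Y s ω - Y s 0 0 ω) ∂μ
      = ∫ ω in {ω | p (G1 ω) (G2 ω)}, homogeneousEffect A1 A2 G1 G2 s ω ∂μ := by
  refine setIntegral_preimage_eq_of_fibers (S := {q | p q.1 q.2}) (hG1.prodMk hG2)
    ((integrable_Yr hG1 hG2 hG1mem hG2mem hYint s).sub (hYint s 0 0))
    (integrable_homogeneousEffect hG1 hG2 s) fun ⟨γ1, γ2⟩ _ => ?_
  have hC : MeasurableSet {ω | G1 ω = γ1 ∧ G2 ω = γ2} :=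
    (hG1 (measurableSet_singleton γ1)).inter (hG2 (measurableSet_singleton γ2))
  rw [preimage_cohorts_singleton]
  calc ∫ ω in {ω | G1 ω = γ1 ∧ G2 ω = γ2}, (Yr G1 G2 Y s ω - Y s 0 0 ω) ∂μ
      = ∫ ω in {ω | G1 ω = γ1 ∧ G2 ω = γ2}, (Y s γ1 γ2 ω - Y s 0 0 ω) ∂μ :=
        setIntegral_congr_fun hC fun ω ⟨h1, h2⟩ => by simp [Yr, h1, h2]
    _ = μ.real {ω | G1 ω = γ1 ∧ G2 ω = γ2} *
          ((if γ1 ≤ (s : ℕ∞) then A1 else 0) + (if γ2 ≤ (s : ℕ∞) then A2 else 0)) :=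
        setIntegral_eq_measureReal_mul_of_cE_eq fun hpos =>
          cE_cell_eq_effects hYint hNA hH hadd (inCohort_of_cell_pos hG1mem hG2mem hpos).1
            (inCohort_of_cell_pos hG1mem hG2mem hpos).2 hpos hs
    _ = ∫ ω in {ω | G1 ω = γ1 ∧ G2 ω = γ2}, homogeneousEffect A1 A2 G1 G2 s ω ∂μ := by
        rw [← smul_eq_mul, ← setIntegral_const]
        exact setIntegral_congr_fun hC fun ω ⟨h1, h2⟩ => by
          simp [homogeneousEffect, Set.indicator_apply, h1, h2]

lemma setIntegral_Yr_sub_Yr [IsFiniteMeasure μ] (hG1 : Measurable G1) (hG2 : Measurable G2)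
    (hG1mem : ∀ ω, InCohort T (G1 ω)) (hG2mem : ∀ ω, InCohort T (G2 ω))
    (hYint : ∀ (t : ℕ) (g1 g2 : ℕ∞), Integrable (Y t g1 g2) μ)
    (hNA : NoAnticipation μ G1 G2 Y T) (hH : HomogeneousEffects μ G1 G2 Y T A1 A2 A)
    (hadd : A = A1 + A2) (p : ℕ∞ → ℕ∞ → Prop) {b t : ℕ} (hb : 1 ≤ b) (hbt : b ≤ t) :
    ∫ ω in {ω | p (G1 ω) (G2 ω)}, (Yr G1 G2 Y t ω - Yr G1 G2 Y b ω) ∂μ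
      = ∫ ω in {ω | p (G1 ω) (G2 ω)}, (Y t 0 0 ω - Y b 0 0 ω) ∂μ
        + μ.real ({ω | p (G1 ω) (G2 ω)} ∩ {ω | G1 ω ≤ t ∧ ¬ G1 ω ≤ b}) * A1
        + μ.real ({ω | p (G1 ω) (G2 ω)} ∩ {ω | G2 ω ≤ t ∧ ¬ G2 ω ≤ b}) * A2 := by
  set E := {ω | p (G1 ω) (G2 ω)}
  have hYr := integrable_Yr hG1 hG2 hG1mem hG2mem hYint
  have hτ := integrable_homogeneousEffect (μ := μ) (A1 := A1) (A2 := A2) hG1 hG2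
  have hW1 : MeasurableSet {ω | G1 ω ≤ t ∧ ¬ G1 ω ≤ b} :=
    hG1 (.of_discrete : MeasurableSet {g : ℕ∞ | g ≤ t ∧ ¬ g ≤ b})
  have hW2 : MeasurableSet {ω | G2 ω ≤ t ∧ ¬ G2 ω ≤ b} :=
    hG2 (.of_discrete : MeasurableSet {g : ℕ∞ | g ≤ t ∧ ¬ g ≤ b})
  have hperiod : ∀ s, 1 ≤ s → ∫ ω in E, Yr G1 G2 Y s ω ∂μ - ∫ ω in E, Y s 0 0 ω ∂μ
      = ∫ ω in E, homogeneousEffect A1 A2 G1 G2 s ω ∂μ := fun s hs => by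
    rw [← integral_sub (hYr s).integrableOn (hYint s 0 0).integrableOn]
    exact setIntegral_Yr_sub_untreated hG1 hG2 hG1mem hG2mem hYint hNA hH hadd p hs
  have hwindow : ∫ ω in E, homogeneousEffect A1 A2 G1 G2 t ω ∂μ
      - ∫ ω in E, homogeneousEffect A1 A2 G1 G2 b ω ∂μ
      = μ.real (E ∩ {ω | G1 ω ≤ t ∧ ¬ G1 ω ≤ b}) * A1
        + μ.real (E ∩ {ω | G2 ω ≤ t ∧ ¬ G2 ω ≤ b}) * A2 := by
    rw [← integral_sub' (hτ t).integrableOn (hτ b).integrableOn, homogeneousEffect_sub hbt,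
      integral_add' ((integrable_const A1).indicator hW1).integrableOn
        ((integrable_const A2).indicator hW2).integrableOn,
      setIntegral_indicator hW1, setIntegral_indicator hW2, setIntegral_const, setIntegral_const,
      smul_eq_mul, smul_eq_mul]
  rw [integral_sub (hYr t).integrableOn (hYr b).integrableOn,
    integral_sub (hYint t 0 0).integrableOn (hYint b 0 0).integrableOn]
  linarith [hperiod t (hb.trans hbt), hperiod b hb]

lemma setIntegral_cohort_eq_measureReal_mul_ATT1 [IsFiniteMeasure μ] (hG1 : Measurable G1)
    (hG2 : Measurable G2) (hG1mem : ∀ ω, InCohort T (G1 ω)) (hG2mem : ∀ ω, InCohort T (G2 ω))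
    (hYint : ∀ (t : ℕ) (g1 g2 : ℕ∞), Integrable (Y t g1 g2) μ)
    (hH : HomogeneousEffects μ G1 G2 Y T A1 A2 A) {g : ℕ∞} {t : ℕ} (hgt : g ≤ t) :
    ∫ ω in {ω | G1 ω = g}, (Y t g 0 ω - Y t 0 0 ω) ∂μ = μ.real {ω | G1 ω = g} * A1 := by
  have h := setIntegral_preimage_eq_of_fibers (S := {q | q.1 = g}) (hG1.prodMk hG2)
    ((hYint t g 0).sub (hYint t 0 0)) (integrable_const A1) ?_
  · rwa [setIntegral_const, smul_eq_mul] at h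
  rintro ⟨γ1, γ2⟩ (rfl : γ1 = g)
  rw [preimage_cohorts_singleton, setIntegral_const, smul_eq_mul]
  exact setIntegral_eq_measureReal_mul_of_cE_eq fun hpos =>
    hH.att1 γ1 γ2 t (inCohort_of_cell_pos hG1mem hG2mem hpos).1
      (inCohort_of_cell_pos hG1mem hG2mem hpos).2 hpos hgt

end TwoEventDiD

theorem naive_staggered_DiD_omitted_event_bias_general
    {Ω : Type*} [MeasurableSpace Ω] (μ : Measure Ω) [IsProbabilityMeasure μ]
    (T : ℕ)
    (G1 G2 : Ω → ℕ∞) (Y : ℕ → ℕ∞ → ℕ∞ → Ω → ℝ)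
    (hG1mem : ∀ ω, InCohort T (G1 ω)) (hG2mem : ∀ ω, InCohort T (G2 ω))
    (hmG1 : ∀ g : ℕ∞, MeasurableSet {ω | G1 ω = g})
    (hmG2 : ∀ g : ℕ∞, MeasurableSet {ω | G2 ω = g})
    (hYint : ∀ (t : ℕ) (g1 g2 : ℕ∞), Integrable (Y t g1 g2) μ)
    -- No Anticipation
    (hNA : NoAnticipation μ G1 G2 Y T)
    -- Homogeneous effects
    (A1 A2 A : ℝ)
    (hA1 : ∀ (g1 g2 : ℕ∞) (t : ℕ), InCohort T g1 → InCohort T g2 →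
      0 < μ {ω | G1 ω = g1 ∧ G2 ω = g2} → g1 ≤ (t : ℕ∞) →
      ATT1 μ G1 G2 Y g1 g2 t = A1)
    (hA2 : ∀ (g1 g2 : ℕ∞) (t : ℕ), InCohort T g1 → InCohort T g2 →
      0 < μ {ω | G1 ω = g1 ∧ G2 ω = g2} → g2 ≤ (t : ℕ∞) →
      ATT2 μ G1 G2 Y g1 g2 t = A2)
    (hA : ∀ (g1 g2 : ℕ∞) (t : ℕ), InCohort T g1 → InCohort T g2 →
      0 < μ {ω | G1 ω = g1 ∧ G2 ω = g2} → g1 ≤ (t : ℕ∞) → g2 ≤ (t : ℕ∞) →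
      ATT μ G1 G2 Y g1 g2 t = A)
    -- the group `g¹ ∈ {2,…,T}` and period `t ∈ {g¹,…,T}`
    (g1 t : ℕ) (hg1 : 2 ≤ g1) (hg1t : g1 ≤ t)
    -- Baseline parallel trend (with base period `b = g¹ − 1`)
    (hPT : cE μ {ω | G1 ω = (g1 : ℕ∞)}
            (fun ω => Y t 0 0 ω - Y (g1 - 1) 0 0 ω)
         = cE μ {ω | ¬ G1 ω ≤ (t : ℕ∞)}
            (fun ω => Y t 0 0 ω - Y (g1 - 1) 0 0 ω))
    -- no interaction
    (hadd : A = A1 + A2) :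
    cE μ {ω | G1 ω = (g1 : ℕ∞)}
        (fun ω => Yr G1 G2 Y t ω - Yr G1 G2 Y (g1 - 1) ω)
      - cE μ {ω | ¬ G1 ω ≤ (t : ℕ∞)}
        (fun ω => Yr G1 G2 Y t ω - Yr G1 G2 Y (g1 - 1) ω)
    = cE μ {ω | G1 ω = (g1 : ℕ∞)} (fun ω => Y t (g1 : ℕ∞) 0 ω - Y t 0 0 ω)
      + (cP μ {ω | G1 ω = (g1 : ℕ∞)}
            {ω | G2 ω ≤ (t : ℕ∞) ∧ ¬ G2 ω ≤ ((g1 - 1 : ℕ) : ℕ∞)}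
          - cP μ {ω | ¬ G1 ω ≤ (t : ℕ∞)}
            {ω | G2 ω ≤ (t : ℕ∞) ∧ ¬ G2 ω ≤ ((g1 - 1 : ℕ) : ℕ∞)}) * A2 := by
  have hG1 : Measurable G1 := measurable_to_countable' hmG1
  have hG2 : Measurable G2 := measurable_to_countable' hmG2
  have hH : HomogeneousEffects μ G1 G2 Y T A1 A2 A := ⟨hA1, hA2, hA⟩
  have hg1t' : (g1 : ℕ∞) ≤ t := by exact_mod_cast hg1t
  have htreated := setIntegral_Yr_sub_Yr hG1 hG2 hG1mem hG2mem hYint hNA hH hadd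
    (fun γ1 _ => γ1 = g1) (by omega : 1 ≤ g1 - 1) (by omega : g1 - 1 ≤ t)
  have hcontrol := setIntegral_Yr_sub_Yr hG1 hG2 hG1mem hG2mem hYint hNA hH hadd
    (fun γ1 _ => ¬ γ1 ≤ t) (by omega : 1 ≤ g1 - 1) (by omega : g1 - 1 ≤ t)
  have hnew : {ω | G1 ω = g1} ∩ {ω | G1 ω ≤ t ∧ ¬ G1 ω ≤ ((g1 - 1 : ℕ) : ℕ∞)}
      = {ω | G1 ω = g1} := by
    refine Set.inter_eq_left.2 fun ω (h : G1 ω = g1) => ⟨h ▸ hg1t', ?_⟩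
    rw [h, not_le]
    exact_mod_cast Nat.sub_one_lt (by omega)
  have hnone : {ω | ¬ G1 ω ≤ t} ∩ {ω | G1 ω ≤ t ∧ ¬ G1 ω ≤ ((g1 - 1 : ℕ) : ℕ∞)} = ∅ :=
    Set.eq_empty_of_forall_notMem fun ω ⟨h, h', _⟩ => h h'
  rw [hnew] at htreated
  rw [hnone, measureReal_empty, zero_mul, add_zero] at hcontrol
  have hmC : MeasurableSet {ω | ¬ G1 ω ≤ t} :=
    hG1 (.of_discrete : MeasurableSet {g : ℕ∞ | ¬ g ≤ t})
  simp only [cE_eq_inv_mul_setIntegral, cP_eq_inv_mul_measureReal (hmG1 _),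
    cP_eq_inv_mul_measureReal hmC] at hPT ⊢
  rw [htreated, hcontrol,
    setIntegral_cohort_eq_measureReal_mul_ATT1 hG1 hG2 hG1mem hG2mem hYint hH hg1t']
  linear_combination hPT

/-- with no interaction (`A = A¹ + A²`), the naive moment equals the
target effect plus the confoundedness diagnostic `Γ₁₂(g¹,t)` times `A²`. -/
theorem naive_staggered_DiD_omitted_event_bias
    {Ω : Type*} [MeasurableSpace Ω] (μ : Measure Ω) [IsProbabilityMeasure μ]
    (T : ℕ) (hT : 2 ≤ T)
    (G1 G2 : Ω → ℕ∞) (Y : ℕ → ℕ∞ → ℕ∞ → Ω → ℝ)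
    (hG1mem : ∀ ω, InCohort T (G1 ω)) (hG2mem : ∀ ω, InCohort T (G2 ω))
    (hmG1 : ∀ g : ℕ∞, MeasurableSet {ω | G1 ω = g})
    (hmG2 : ∀ g : ℕ∞, MeasurableSet {ω | G2 ω = g})
    (hYint : ∀ (t : ℕ) (g1 g2 : ℕ∞), Integrable (Y t g1 g2) μ)
    (hYtop1 : ∀ (t : ℕ) (g2 : ℕ∞), Y t ⊤ g2 = Y t 0 g2)
    (hYtop2 : ∀ (t : ℕ) (g1 : ℕ∞), Y t g1 ⊤ = Y t g1 0)
    -- No Anticipation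
    (hNA : NoAnticipation μ G1 G2 Y T)
    -- Homogeneous effects
    (A1 A2 A : ℝ)
    (hA1 : ∀ (g1 g2 : ℕ∞) (t : ℕ), InCohort T g1 → InCohort T g2 →
      0 < μ {ω | G1 ω = g1 ∧ G2 ω = g2} → g1 ≤ (t : ℕ∞) →
      ATT1 μ G1 G2 Y g1 g2 t = A1)
    (hA2 : ∀ (g1 g2 : ℕ∞) (t : ℕ), InCohort T g1 → InCohort T g2 →
      0 < μ {ω | G1 ω = g1 ∧ G2 ω = g2} → g2 ≤ (t : ℕ∞) →
      ATT2 μ G1 G2 Y g1 g2 t = A2)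
    (hA : ∀ (g1 g2 : ℕ∞) (t : ℕ), InCohort T g1 → InCohort T g2 →
      0 < μ {ω | G1 ω = g1 ∧ G2 ω = g2} → g1 ≤ (t : ℕ∞) → g2 ≤ (t : ℕ∞) →
      ATT μ G1 G2 Y g1 g2 t = A)
    -- the group `g¹ ∈ {2,…,T}` and period `t ∈ {g¹,…,T}`
    (g1 t : ℕ) (hg1 : 2 ≤ g1) (hg1T : g1 ≤ T) (hg1t : g1 ≤ t) (htT : t ≤ T)
    (hposG : 0 < μ {ω | G1 ω = (g1 : ℕ∞)})
    (hposC : 0 < μ {ω | ¬ G1 ω ≤ (t : ℕ∞)})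
    -- Baseline parallel trend (with base period `b = g¹ − 1`)
    (hPT : cE μ {ω | G1 ω = (g1 : ℕ∞)}
            (fun ω => Y t 0 0 ω - Y (g1 - 1) 0 0 ω)
         = cE μ {ω | ¬ G1 ω ≤ (t : ℕ∞)}
            (fun ω => Y t 0 0 ω - Y (g1 - 1) 0 0 ω))
    -- no interaction
    (hadd : A = A1 + A2) :
    cE μ {ω | G1 ω = (g1 : ℕ∞)}
        (fun ω => Yr G1 G2 Y t ω - Yr G1 G2 Y (g1 - 1) ω)
      - cE μ {ω | ¬ G1 ω ≤ (t : ℕ∞)}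
        (fun ω => Yr G1 G2 Y t ω - Yr G1 G2 Y (g1 - 1) ω)
    = cE μ {ω | G1 ω = (g1 : ℕ∞)} (fun ω => Y t (g1 : ℕ∞) 0 ω - Y t 0 0 ω)
      + (cP μ {ω | G1 ω = (g1 : ℕ∞)}
            {ω | G2 ω ≤ (t : ℕ∞) ∧ ¬ G2 ω ≤ ((g1 - 1 : ℕ) : ℕ∞)}
          - cP μ {ω | ¬ G1 ω ≤ (t : ℕ∞)}
            {ω | G2 ω ≤ (t : ℕ∞) ∧ ¬ G2 ω ≤ ((g1 - 1 : ℕ) : ℕ∞)}) * A2 :=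
  naive_staggered_DiD_omitted_event_bias_general μ T G1 G2 Y hG1mem hG2mem hmG1 hmG2 hYint hNA A1 A2
    A hA1 hA2 hA g1 t hg1 hg1t hPT hadd
end
end

section
/- Let g¹ ∈ {2,…,T} and t ∈ {g¹,…,T} with P(G¹=g¹) > 0 and P(D¹_t=0) > 0, and set b := g¹−1. Under No Anticipation, Homogeneous effects, and the Baseline parallel trend, if additionally A = A¹ + A² (no interaction) and for each s ∈ {b, t} the indicator D²_s is independent of G¹ (so that P(D²_s=1 | G¹=g¹) = P(D²_s=1) and P(D²_s=1 | D¹_t=0) = P(D²_s=1)), then the naive staggered-DiD moment is unbiased: ATT^CS(g¹,t) = ATT¹(g¹,t). -/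
/- Two-event staggered Difference-in-Differences setup (Callaway–Sant'Anna with a
confounding event).  Cohorts take values in `{2,…,T} ∪ {∞} ⊆ ℕ∞`; the potential-outcome
index `0 : ℕ∞` codes "never treated by that event". -/

open MeasureTheory ProbabilityTheory

noncomputable section

set_option linter.unusedSectionVars false

namespace DiDAux

open TwoEventDiD Finset

variable {Ω : Type*} [MeasurableSpace Ω]

lemma cE_eq (μ : Measure Ω) (S : Set Ω) (Z : Ω → ℝ) :
    cE μ S Z = (μ S).toReal⁻¹ * ∫ ω in S, Z ω ∂μ := by
  rw [cE, ProbabilityTheory.cond, integral_smul_measure, ENNReal.toReal_inv, smul_eq_mul]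

lemma cP_eq (μ : Measure Ω) {S : Set Ω} (hS : MeasurableSet S) (B : Set Ω) :
    cP μ S B = (μ S).toReal⁻¹ * (μ (S ∩ B)).toReal := by
  rw [cP, ProbabilityTheory.cond_apply hS, ENNReal.toReal_mul, ENNReal.toReal_inv]

/-- the finite set of possible cohort values -/
def F (T : ℕ) : Finset ℕ∞ := insert ⊤ ((Finset.Icc 2 T).image (Nat.cast : ℕ → ℕ∞))

lemma mem_F {T : ℕ} {g : ℕ∞} (h : InCohort T g) : g ∈ F T := by
  rcases h with h | ⟨h2, hT⟩
  · simp [F, h]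
  · obtain ⟨n, rfl, hnT⟩ := ENat.le_coe_iff.1 hT
    simp only [F, mem_insert, mem_image, mem_Icc]
    exact Or.inr ⟨n, ⟨by exact_mod_cast h2, hnT⟩, rfl⟩

lemma F_mem {T : ℕ} {g : ℕ∞} (h : g ∈ F T) : InCohort T g := by
  simp only [F, mem_insert, mem_image, mem_Icc] at h
  rcases h with h | ⟨n, ⟨h2, hT⟩, rfl⟩
  · exact Or.inl h
  · exact Or.inr ⟨by exact_mod_cast h2, by exact_mod_cast hT⟩

variable (G1 G2 : Ω → ℕ∞)

/-- cohort cell -/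
def cell (a c : ℕ∞) : Set Ω := {ω | G1 ω = a ∧ G2 ω = c}

lemma measurable_cell (hmG1 : ∀ g : ℕ∞, MeasurableSet {ω | G1 ω = g})
    (hmG2 : ∀ g : ℕ∞, MeasurableSet {ω | G2 ω = g}) (a c : ℕ∞) :
    MeasurableSet (cell G1 G2 a c) :=
  (hmG1 a).inter (hmG2 c)

lemma measurable_le (hmG1 : ∀ g : ℕ∞, MeasurableSet {ω | G1 ω = g}) (s : ℕ) :
    MeasurableSet {ω | G1 ω ≤ (s : ℕ∞)} := by
  have h : {ω | G1 ω ≤ (s : ℕ∞)} = ⋃ n ∈ Finset.range (s + 1), {ω | G1 ω = (n : ℕ∞)} := by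
    ext ω
    simp only [Set.mem_setOf_eq, Set.mem_iUnion, Finset.mem_range]
    constructor
    · intro h
      obtain ⟨n, hn, hns⟩ := ENat.le_coe_iff.1 h
      exact ⟨n, Nat.lt_succ_of_le hns, hn⟩
    · rintro ⟨n, hn, hEq⟩
      rw [hEq]
      exact_mod_cast Nat.le_of_lt_succ hn
  rw [h]
  exact Finset.measurableSet_biUnion _ fun n _ => hmG1 n

lemma cell_pairwise (T : ℕ) (S : Set Ω) :
    Set.Pairwise ↑(F T ×ˢ F T)
      (Function.onFun Disjoint (fun p : ℕ∞ × ℕ∞ => S ∩ cell G1 G2 p.1 p.2)) := by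
  intro p _ q _ hpq
  simp only [Function.onFun]
  rw [Set.disjoint_left]
  rintro ω ⟨_, h1, h2⟩ ⟨_, h3, h4⟩
  exact hpq (Prod.ext (h1.symm.trans h3) (h2.symm.trans h4))

lemma cover_eq (T : ℕ) (hG1mem : ∀ ω, InCohort T (G1 ω)) (hG2mem : ∀ ω, InCohort T (G2 ω))
    (S : Set Ω) : S = ⋃ p ∈ F T ×ˢ F T, S ∩ cell G1 G2 p.1 p.2 := by
  ext ω
  constructor
  · intro hω
    have hp : (G1 ω, G2 ω) ∈ F T ×ˢ F T :=
      Finset.mem_product.2 ⟨mem_F (hG1mem ω), mem_F (hG2mem ω)⟩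
    have : ω ∈ S ∩ cell G1 G2 (G1 ω, G2 ω).1 (G1 ω, G2 ω).2 := ⟨hω, rfl, rfl⟩
    exact Set.mem_biUnion hp this
  · simp only [Set.mem_iUnion]
    rintro ⟨p, _, hω, _⟩
    exact hω

lemma integral_partition (μ : Measure Ω) (T : ℕ)
    (hmG1 : ∀ g : ℕ∞, MeasurableSet {ω | G1 ω = g})
    (hmG2 : ∀ g : ℕ∞, MeasurableSet {ω | G2 ω = g})
    (hG1mem : ∀ ω, InCohort T (G1 ω)) (hG2mem : ∀ ω, InCohort T (G2 ω))
    {S : Set Ω} (hS : MeasurableSet S) {Z : Ω → ℝ} (hZ : Integrable Z μ) :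
    ∫ ω in S, Z ω ∂μ = ∑ p ∈ F T ×ˢ F T, ∫ ω in S ∩ cell G1 G2 p.1 p.2, Z ω ∂μ := by
  conv_lhs => rw [cover_eq G1 G2 T hG1mem hG2mem S]
  exact integral_biUnion_finset _
    (fun p _ => hS.inter (measurable_cell G1 G2 hmG1 hmG2 p.1 p.2))
    (cell_pairwise G1 G2 T S)
    (fun p _ => hZ.integrableOn)

lemma measure_partition (μ : Measure Ω) [IsProbabilityMeasure μ] (T : ℕ)
    (hmG1 : ∀ g : ℕ∞, MeasurableSet {ω | G1 ω = g})
    (hmG2 : ∀ g : ℕ∞, MeasurableSet {ω | G2 ω = g})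
    (hG1mem : ∀ ω, InCohort T (G1 ω)) (hG2mem : ∀ ω, InCohort T (G2 ω))
    {S : Set Ω} (hS : MeasurableSet S) :
    (μ S).toReal = ∑ p ∈ F T ×ˢ F T, (μ (S ∩ cell G1 G2 p.1 p.2)).toReal := by
  rw [← ENNReal.toReal_sum (fun p _ => measure_ne_top μ _)]
  congr 1
  conv_lhs => rw [cover_eq G1 G2 T hG1mem hG2mem S]
  exact measure_biUnion_finset (cell_pairwise G1 G2 T S)
    (fun p _ => hS.inter (measurable_cell G1 G2 hmG1 hmG2 p.1 p.2))

/-- global integrability of the realized outcome -/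
lemma Yr_integrable (μ : Measure Ω) (Y : ℕ → ℕ∞ → ℕ∞ → Ω → ℝ) (T : ℕ)
    (hmG1 : ∀ g : ℕ∞, MeasurableSet {ω | G1 ω = g})
    (hmG2 : ∀ g : ℕ∞, MeasurableSet {ω | G2 ω = g})
    (hG1mem : ∀ ω, InCohort T (G1 ω)) (hG2mem : ∀ ω, InCohort T (G2 ω))
    (hYint : ∀ (t : ℕ) (g1 g2 : ℕ∞), Integrable (Y t g1 g2) μ) (s : ℕ) :
    Integrable (Yr G1 G2 Y s) μ := by
  rw [← integrableOn_univ, cover_eq G1 G2 T hG1mem hG2mem Set.univ]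
  refine integrableOn_finset_iUnion.2 fun p _ => ?_
  refine ((hYint s p.1 p.2).integrableOn).congr_fun ?_
    (MeasurableSet.univ.inter (measurable_cell G1 G2 hmG1 hmG2 p.1 p.2))
  rintro ω ⟨-, h1, h2⟩
  simp [Yr, h1, h2]

/-- integrability with respect to the conditional measure -/
lemma integrable_cond (μ : Measure Ω) {S : Set Ω} (hS : μ S ≠ 0) {f : Ω → ℝ}
    (hf : Integrable f μ) : Integrable f (μ[|S]) := by
  rw [ProbabilityTheory.cond]
  exact (hf.restrict).smul_measure (by simp [hS])

lemma cE_sub (μ : Measure Ω) {S : Set Ω} (hS : μ S ≠ 0) {f g : Ω → ℝ}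
    (hf : Integrable f μ) (hg : Integrable g μ) :
    cE μ S (fun ω => f ω - g ω) = cE μ S f - cE μ S g :=
  integral_sub (integrable_cond μ hS hf) (integrable_cond μ hS hg)


/-- The core cell-level computation: on a positive-probability cohort cell,
No Anticipation plus homogeneity pin down the mean of the realized outcome. -/
lemma cell_integral (μ : Measure Ω) [IsProbabilityMeasure μ]
    (Y : ℕ → ℕ∞ → ℕ∞ → Ω → ℝ) (T : ℕ)
    (hYint : ∀ (t : ℕ) (g1 g2 : ℕ∞), Integrable (Y t g1 g2) μ)
    (hNA : NoAnticipation μ G1 G2 Y T)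
    (A1 A2 A : ℝ)
    (hA1 : ∀ (g1 g2 : ℕ∞) (t : ℕ), InCohort T g1 → InCohort T g2 →
      0 < μ {ω | G1 ω = g1 ∧ G2 ω = g2} → g1 ≤ (t : ℕ∞) →
      ATT1 μ G1 G2 Y g1 g2 t = A1)
    (hA2 : ∀ (g1 g2 : ℕ∞) (t : ℕ), InCohort T g1 → InCohort T g2 →
      0 < μ {ω | G1 ω = g1 ∧ G2 ω = g2} → g2 ≤ (t : ℕ∞) →
      ATT2 μ G1 G2 Y g1 g2 t = A2)
    (hA : ∀ (g1 g2 : ℕ∞) (t : ℕ), InCohort T g1 → InCohort T g2 →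
      0 < μ {ω | G1 ω = g1 ∧ G2 ω = g2} → g1 ≤ (t : ℕ∞) → g2 ≤ (t : ℕ∞) →
      ATT μ G1 G2 Y g1 g2 t = A)
    (hadd : A = A1 + A2)
    {a c : ℕ∞} (ha : InCohort T a) (hc : InCohort T c)
    {s : ℕ} (hs : 1 ≤ s) :
    ∫ ω in cell G1 G2 a c, Y s a c ω ∂μ
      = ∫ ω in cell G1 G2 a c, Y s 0 0 ω ∂μ
        + (μ (cell G1 G2 a c)).toReal *
          ((if a ≤ (s : ℕ∞) then A1 else 0) + (if c ≤ (s : ℕ∞) then A2 else 0)) := by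
  classical
  by_cases hz : μ (cell G1 G2 a c) = 0
  · rw [show μ.restrict (cell G1 G2 a c) = 0 from Measure.restrict_eq_zero.2 hz]
    simp [hz]
  · have hposμ : 0 < μ {ω | G1 ω = a ∧ G2 ω = c} := pos_iff_ne_zero.2 hz
    have hz' : μ {ω | G1 ω = a ∧ G2 ω = c} ≠ 0 := hz
    have hmne : (μ (cell G1 G2 a c)).toReal ≠ 0 :=
      (ENNReal.toReal_pos hz (measure_ne_top μ _)).ne'
    have key : cE μ (cell G1 G2 a c) (Y s a c) = cE μ (cell G1 G2 a c) (Y s 0 0)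
        + ((if a ≤ (s : ℕ∞) then A1 else 0) + (if c ≤ (s : ℕ∞) then A2 else 0)) := by
      show cE μ {ω | G1 ω = a ∧ G2 ω = c} (Y s a c)
        = cE μ {ω | G1 ω = a ∧ G2 ω = c} (Y s 0 0) + _
      by_cases has : a ≤ (s : ℕ∞) <;> by_cases hcs : c ≤ (s : ℕ∞)
      · have hATT := hA a c s ha hc hposμ has hcs
        simp only [ATT] at hATT
        rw [cE_sub μ hz' (hYint s a c) (hYint s 0 0)] at hATT
        simp only [if_pos has, if_pos hcs]
        rw [hadd] at hATT
        linarith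
      · have hsc : (s : ℕ∞) < c := lt_of_not_ge hcs
        have hna := (hNA a c ha hc hposμ s hs (lt_max_iff.2 (Or.inr hsc))).2.1 ⟨has, hsc⟩
        have hATT := hA1 a c s ha hc hposμ has
        simp only [ATT1] at hATT
        rw [cE_sub μ hz' (hYint s a 0) (hYint s 0 0)] at hATT
        simp only [if_pos has, if_neg hcs]
        rw [hna]
        linarith
      · have hsa : (s : ℕ∞) < a := lt_of_not_ge has
        have hna := (hNA a c ha hc hposμ s hs (lt_max_iff.2 (Or.inl hsa))).2.2 ⟨hcs, hsa⟩
        have hATT := hA2 a c s ha hc hposμ hcs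
        simp only [ATT2] at hATT
        rw [cE_sub μ hz' (hYint s 0 c) (hYint s 0 0)] at hATT
        simp only [if_neg has, if_pos hcs]
        rw [hna]
        linarith
      · have hsa : (s : ℕ∞) < a := lt_of_not_ge has
        have hsc : (s : ℕ∞) < c := lt_of_not_ge hcs
        have hna := (hNA a c ha hc hposμ s hs (lt_max_iff.2 (Or.inl hsa))).1
          (lt_min hsa hsc)
        simp only [if_neg has, if_neg hcs]
        rw [hna]
        ring
    rw [cE_eq, cE_eq] at key
    have hinv : (μ (cell G1 G2 a c)).toReal * (μ (cell G1 G2 a c)).toReal⁻¹ = 1 :=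
      mul_inv_cancel₀ hmne
    have := congrArg (fun x => (μ (cell G1 G2 a c)).toReal * x) key
    simp only [mul_add, ← mul_assoc, hinv, one_mul] at this
    linarith [this]

/-- Group-level aggregation: for any event defined through `G¹`, the mean realized
outcome decomposes into the untreated baseline plus treatment-share effects. -/
lemma group_integral (μ : Measure Ω) [IsProbabilityMeasure μ]
    (Y : ℕ → ℕ∞ → ℕ∞ → Ω → ℝ) (T : ℕ)
    (hmG1 : ∀ g : ℕ∞, MeasurableSet {ω | G1 ω = g})
    (hmG2 : ∀ g : ℕ∞, MeasurableSet {ω | G2 ω = g})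
    (hG1mem : ∀ ω, InCohort T (G1 ω)) (hG2mem : ∀ ω, InCohort T (G2 ω))
    (hYint : ∀ (t : ℕ) (g1 g2 : ℕ∞), Integrable (Y t g1 g2) μ)
    (hNA : NoAnticipation μ G1 G2 Y T)
    (A1 A2 A : ℝ)
    (hA1 : ∀ (g1 g2 : ℕ∞) (t : ℕ), InCohort T g1 → InCohort T g2 →
      0 < μ {ω | G1 ω = g1 ∧ G2 ω = g2} → g1 ≤ (t : ℕ∞) →
      ATT1 μ G1 G2 Y g1 g2 t = A1)
    (hA2 : ∀ (g1 g2 : ℕ∞) (t : ℕ), InCohort T g1 → InCohort T g2 →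
      0 < μ {ω | G1 ω = g1 ∧ G2 ω = g2} → g2 ≤ (t : ℕ∞) →
      ATT2 μ G1 G2 Y g1 g2 t = A2)
    (hA : ∀ (g1 g2 : ℕ∞) (t : ℕ), InCohort T g1 → InCohort T g2 →
      0 < μ {ω | G1 ω = g1 ∧ G2 ω = g2} → g1 ≤ (t : ℕ∞) → g2 ≤ (t : ℕ∞) →
      ATT μ G1 G2 Y g1 g2 t = A)
    (hadd : A = A1 + A2)
    (P : Set ℕ∞) {s : ℕ} (hs : 1 ≤ s) :
    ∫ ω in G1 ⁻¹' P, Yr G1 G2 Y s ω ∂μ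
      = (∫ ω in G1 ⁻¹' P, Y s 0 0 ω ∂μ)
        + A1 * (μ (G1 ⁻¹' P ∩ {ω | G1 ω ≤ (s : ℕ∞)})).toReal
        + A2 * (μ (G1 ⁻¹' P ∩ {ω | G2 ω ≤ (s : ℕ∞)})).toReal := by
  classical
  have hP : MeasurableSet (G1 ⁻¹' P) := by
    have hun : G1 ⁻¹' P = ⋃ g ∈ P, {ω | G1 ω = g} := by
      ext ω
      simp only [Set.mem_preimage, Set.mem_iUnion, Set.mem_setOf_eq]
      exact ⟨fun h => ⟨_, h, rfl⟩, fun ⟨g, hg, he⟩ => he ▸ hg⟩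
    rw [hun]
    exact MeasurableSet.biUnion (Set.to_countable P) fun g _ => hmG1 g
  have hm_le1 : MeasurableSet {ω | G1 ω ≤ (s : ℕ∞)} := measurable_le G1 hmG1 s
  have hm_le2 : MeasurableSet {ω | G2 ω ≤ (s : ℕ∞)} := measurable_le G2 hmG2 s
  rw [integral_partition G1 G2 μ T hmG1 hmG2 hG1mem hG2mem hP
        (Yr_integrable G1 G2 μ Y T hmG1 hmG2 hG1mem hG2mem hYint s),
      integral_partition G1 G2 μ T hmG1 hmG2 hG1mem hG2mem hP (hYint s 0 0),
      measure_partition G1 G2 μ T hmG1 hmG2 hG1mem hG2mem (hP.inter hm_le1),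
      measure_partition G1 G2 μ T hmG1 hmG2 hG1mem hG2mem (hP.inter hm_le2),
      Finset.mul_sum, Finset.mul_sum, ← Finset.sum_add_distrib, ← Finset.sum_add_distrib]
  refine Finset.sum_congr rfl fun p hp => ?_
  obtain ⟨hpa, hpc⟩ := Finset.mem_product.1 hp
  by_cases haP : p.1 ∈ P
  · have hSc : G1 ⁻¹' P ∩ cell G1 G2 p.1 p.2 = cell G1 G2 p.1 p.2 :=
      Set.inter_eq_self_of_subset_right fun ω hω => by
        show G1 ω ∈ P
        rw [hω.1]
        exact haP
    have h1 : (G1 ⁻¹' P ∩ {ω | G1 ω ≤ (s : ℕ∞)}) ∩ cell G1 G2 p.1 p.2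
        = if p.1 ≤ (s : ℕ∞) then cell G1 G2 p.1 p.2 else ∅ := by
      split_ifs with h
      · ext ω
        constructor
        · rintro ⟨-, hcel⟩
          exact hcel
        · intro hcel
          refine ⟨⟨?_, ?_⟩, hcel⟩
          · show G1 ω ∈ P
            rw [hcel.1]; exact haP
          · show G1 ω ≤ (s : ℕ∞)
            rw [hcel.1]; exact h
      · ext ω
        simp only [Set.mem_inter_iff, Set.mem_empty_iff_false, iff_false, not_and]
        rintro ⟨-, hle⟩ hcel
        exact absurd (hcel.1 ▸ hle) h
    have h2 : (G1 ⁻¹' P ∩ {ω | G2 ω ≤ (s : ℕ∞)}) ∩ cell G1 G2 p.1 p.2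
        = if p.2 ≤ (s : ℕ∞) then cell G1 G2 p.1 p.2 else ∅ := by
      split_ifs with h
      · ext ω
        constructor
        · rintro ⟨-, hcel⟩
          exact hcel
        · intro hcel
          refine ⟨⟨?_, ?_⟩, hcel⟩
          · show G1 ω ∈ P
            rw [hcel.1]; exact haP
          · show G2 ω ≤ (s : ℕ∞)
            rw [hcel.2]; exact h
      · ext ω
        simp only [Set.mem_inter_iff, Set.mem_empty_iff_false, iff_false, not_and]
        rintro ⟨-, hle⟩ hcel
        exact absurd (hcel.2 ▸ hle) h
    rw [hSc, h1, h2]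
    have hcongr : ∫ ω in cell G1 G2 p.1 p.2, Yr G1 G2 Y s ω ∂μ
        = ∫ ω in cell G1 G2 p.1 p.2, Y s p.1 p.2 ω ∂μ :=
      setIntegral_congr_fun (measurable_cell G1 G2 hmG1 hmG2 p.1 p.2)
        fun ω hω => by
          show Y s (G1 ω) (G2 ω) ω = Y s p.1 p.2 ω
          rw [hω.1, hω.2]
    rw [hcongr, cell_integral G1 G2 μ Y T hYint hNA A1 A2 A hA1 hA2 hA hadd
          (F_mem hpa) (F_mem hpc) hs]
    split_ifs <;> (try simp only [measure_empty, ENNReal.toReal_zero]) <;> ring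
  · have h0' : G1 ⁻¹' P ∩ cell G1 G2 p.1 p.2 = ∅ := by
      ext ω
      simp only [Set.mem_inter_iff, Set.mem_empty_iff_false, iff_false, not_and]
      intro hmem hcel
      exact absurd (hcel.1 ▸ hmem) haP
    have h0 : ∀ B : Set Ω, (G1 ⁻¹' P ∩ B) ∩ cell G1 G2 p.1 p.2 = ∅ := fun B => by
      ext ω
      simp only [Set.mem_inter_iff, Set.mem_empty_iff_false, iff_false, not_and]
      rintro ⟨hmem, -⟩ hcel
      exact absurd (hcel.1 ▸ hmem) haP
    rw [h0', h0, h0]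
    simp

/-- The target effect aggregates to `A1`. -/
lemma target_eq (μ : Measure Ω) [IsProbabilityMeasure μ]
    (Y : ℕ → ℕ∞ → ℕ∞ → Ω → ℝ) (T : ℕ)
    (hmG1 : ∀ g : ℕ∞, MeasurableSet {ω | G1 ω = g})
    (hmG2 : ∀ g : ℕ∞, MeasurableSet {ω | G2 ω = g})
    (hG1mem : ∀ ω, InCohort T (G1 ω)) (hG2mem : ∀ ω, InCohort T (G2 ω))
    (hYint : ∀ (t : ℕ) (g1 g2 : ℕ∞), Integrable (Y t g1 g2) μ)
    (A1 : ℝ)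
    (hA1 : ∀ (g1 g2 : ℕ∞) (t : ℕ), InCohort T g1 → InCohort T g2 →
      0 < μ {ω | G1 ω = g1 ∧ G2 ω = g2} → g1 ≤ (t : ℕ∞) →
      ATT1 μ G1 G2 Y g1 g2 t = A1)
    (g1 t : ℕ) (hg1c : InCohort T (g1 : ℕ∞)) (hg1t : (g1 : ℕ∞) ≤ (t : ℕ∞))
    (hpos : 0 < μ {ω | G1 ω = (g1 : ℕ∞)}) :
    cE μ {ω | G1 ω = (g1 : ℕ∞)} (fun ω => Y t (g1 : ℕ∞) 0 ω - Y t 0 0 ω) = A1 := by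
  classical
  have hS : MeasurableSet {ω | G1 ω = (g1 : ℕ∞)} := hmG1 _
  have hint : Integrable (fun ω => Y t (g1 : ℕ∞) 0 ω - Y t 0 0 ω) μ :=
    (hYint t _ 0).sub (hYint t 0 0)
  have hkey : ∫ ω in {ω | G1 ω = (g1 : ℕ∞)}, (Y t (g1 : ℕ∞) 0 ω - Y t 0 0 ω) ∂μ
      = (μ {ω | G1 ω = (g1 : ℕ∞)}).toReal * A1 := by
    rw [integral_partition G1 G2 μ T hmG1 hmG2 hG1mem hG2mem hS hint,
        measure_partition G1 G2 μ T hmG1 hmG2 hG1mem hG2mem hS, Finset.sum_mul]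
    refine Finset.sum_congr rfl fun p hp => ?_
    obtain ⟨hpa, hpc⟩ := Finset.mem_product.1 hp
    obtain ⟨a, c⟩ := p
    dsimp only
    by_cases hap : a = (g1 : ℕ∞)
    · subst hap
      have hSc : {ω | G1 ω = (g1 : ℕ∞)} ∩ cell G1 G2 (g1 : ℕ∞) c
          = cell G1 G2 (g1 : ℕ∞) c :=
        Set.inter_eq_self_of_subset_right fun ω hω => hω.1
      rw [hSc]
      show ∫ ω in {ω | G1 ω = (g1 : ℕ∞) ∧ G2 ω = c}, (Y t (g1 : ℕ∞) 0 ω - Y t 0 0 ω) ∂μ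
        = (μ {ω | G1 ω = (g1 : ℕ∞) ∧ G2 ω = c}).toReal * A1
      by_cases hz : μ {ω | G1 ω = (g1 : ℕ∞) ∧ G2 ω = c} = 0
      · rw [show μ.restrict {ω | G1 ω = (g1 : ℕ∞) ∧ G2 ω = c} = 0 from
          Measure.restrict_eq_zero.2 hz, hz]
        simp
      · have hATT := hA1 (g1 : ℕ∞) c t hg1c (F_mem hpc) (pos_iff_ne_zero.2 hz) hg1t
        simp only [ATT1] at hATT
        rw [cE_eq] at hATT
        have hmne : (μ {ω | G1 ω = (g1 : ℕ∞) ∧ G2 ω = c}).toReal ≠ 0 :=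
          (ENNReal.toReal_pos hz (measure_ne_top μ _)).ne'
        rw [← hATT, ← mul_assoc, mul_inv_cancel₀ hmne, one_mul]
    · have h0 : {ω | G1 ω = (g1 : ℕ∞)} ∩ cell G1 G2 a c = ∅ := by
        ext ω
        simp only [Set.mem_inter_iff, Set.mem_empty_iff_false, iff_false, not_and,
          Set.mem_setOf_eq]
        intro h1 hcel
        exact hap (hcel.1 ▸ h1)
      rw [h0]
      simp
  rw [cE_eq, hkey, ← mul_assoc, inv_mul_cancel₀
    (ENNReal.toReal_pos hpos.ne' (measure_ne_top μ _)).ne', one_mul]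

end DiDAux

open TwoEventDiD

/-- with no interaction and timing of event 2 independent of the
event-1 cohort, the naive staggered-DiD moment is unbiased. -/
theorem naive_staggered_DiD_unbiased_under_independence
    {Ω : Type*} [MeasurableSpace Ω] (μ : Measure Ω) [IsProbabilityMeasure μ]
    (T : ℕ) (hT : 2 ≤ T)
    (G1 G2 : Ω → ℕ∞) (Y : ℕ → ℕ∞ → ℕ∞ → Ω → ℝ)
    (hG1mem : ∀ ω, InCohort T (G1 ω)) (hG2mem : ∀ ω, InCohort T (G2 ω))
    (hmG1 : ∀ g : ℕ∞, MeasurableSet {ω | G1 ω = g})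
    (hmG2 : ∀ g : ℕ∞, MeasurableSet {ω | G2 ω = g})
    (hYint : ∀ (t : ℕ) (g1 g2 : ℕ∞), Integrable (Y t g1 g2) μ)
    (hYtop1 : ∀ (t : ℕ) (g2 : ℕ∞), Y t ⊤ g2 = Y t 0 g2)
    (hYtop2 : ∀ (t : ℕ) (g1 : ℕ∞), Y t g1 ⊤ = Y t g1 0)
    -- No Anticipation
    (hNA : NoAnticipation μ G1 G2 Y T)
    -- Homogeneous effects
    (A1 A2 A : ℝ)
    (hA1 : ∀ (g1 g2 : ℕ∞) (t : ℕ), InCohort T g1 → InCohort T g2 →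
      0 < μ {ω | G1 ω = g1 ∧ G2 ω = g2} → g1 ≤ (t : ℕ∞) →
      ATT1 μ G1 G2 Y g1 g2 t = A1)
    (hA2 : ∀ (g1 g2 : ℕ∞) (t : ℕ), InCohort T g1 → InCohort T g2 →
      0 < μ {ω | G1 ω = g1 ∧ G2 ω = g2} → g2 ≤ (t : ℕ∞) →
      ATT2 μ G1 G2 Y g1 g2 t = A2)
    (hA : ∀ (g1 g2 : ℕ∞) (t : ℕ), InCohort T g1 → InCohort T g2 →
      0 < μ {ω | G1 ω = g1 ∧ G2 ω = g2} → g1 ≤ (t : ℕ∞) → g2 ≤ (t : ℕ∞) →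
      ATT μ G1 G2 Y g1 g2 t = A)
    -- the group `g¹ ∈ {2,…,T}` and period `t ∈ {g¹,…,T}`
    (g1 t : ℕ) (hg1 : 2 ≤ g1) (hg1T : g1 ≤ T) (hg1t : g1 ≤ t) (htT : t ≤ T)
    (hposG : 0 < μ {ω | G1 ω = (g1 : ℕ∞)})
    (hposC : 0 < μ {ω | ¬ G1 ω ≤ (t : ℕ∞)})
    -- Baseline parallel trend (with base period `b = g¹ − 1`)
    (hPT : cE μ {ω | G1 ω = (g1 : ℕ∞)}
            (fun ω => Y t 0 0 ω - Y (g1 - 1) 0 0 ω)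
         = cE μ {ω | ¬ G1 ω ≤ (t : ℕ∞)}
            (fun ω => Y t 0 0 ω - Y (g1 - 1) 0 0 ω))
    -- no interaction
    (hadd : A = A1 + A2)
    -- independence of `D²_s` from `G¹` for `s ∈ {b, t}`
    (hind : ∀ s : ℕ, s = g1 - 1 ∨ s = t →
      cP μ {ω | G1 ω = (g1 : ℕ∞)} {ω | G2 ω ≤ (s : ℕ∞)}
          = (μ {ω | G2 ω ≤ (s : ℕ∞)}).toReal ∧
      cP μ {ω | ¬ G1 ω ≤ (t : ℕ∞)} {ω | G2 ω ≤ (s : ℕ∞)}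
          = (μ {ω | G2 ω ≤ (s : ℕ∞)}).toReal) :
    cE μ {ω | G1 ω = (g1 : ℕ∞)}
        (fun ω => Yr G1 G2 Y t ω - Yr G1 G2 Y (g1 - 1) ω)
      - cE μ {ω | ¬ G1 ω ≤ (t : ℕ∞)}
        (fun ω => Yr G1 G2 Y t ω - Yr G1 G2 Y (g1 - 1) ω)
    = cE μ {ω | G1 ω = (g1 : ℕ∞)} (fun ω => Y t (g1 : ℕ∞) 0 ω - Y t 0 0 ω) := by
  classical
  set b := g1 - 1 with hbdef
  have hb1 : 1 ≤ b := by omega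
  have ht1 : 1 ≤ t := by omega
  have hbt : b ≤ t := by omega
  have hg1c : InCohort T (g1 : ℕ∞) :=
    Or.inr ⟨by exact_mod_cast hg1, by exact_mod_cast hg1T⟩
  set S1 : Set Ω := {ω | G1 ω = (g1 : ℕ∞)} with hS1def
  set S0 : Set Ω := {ω | ¬ G1 ω ≤ (t : ℕ∞)} with hS0def
  have hS1m : MeasurableSet S1 := hmG1 _
  have hS0m : MeasurableSet S0 := (DiDAux.measurable_le G1 hmG1 t).compl
  have hm1 : (μ S1).toReal ≠ 0 :=
    (ENNReal.toReal_pos hposG.ne' (measure_ne_top μ _)).ne'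
  have hm0 : (μ S0).toReal ≠ 0 :=
    (ENNReal.toReal_pos hposC.ne' (measure_ne_top μ _)).ne'
  -- set identities
  have hS1t : S1 ∩ {ω | G1 ω ≤ (t : ℕ∞)} = S1 := by
    apply Set.inter_eq_self_of_subset_left
    intro ω hω
    show G1 ω ≤ (t : ℕ∞)
    rw [show G1 ω = (g1 : ℕ∞) from hω]
    exact_mod_cast hg1t
  have hS1b : S1 ∩ {ω | G1 ω ≤ (b : ℕ∞)} = ∅ := by
    ext ω
    simp only [Set.mem_inter_iff, Set.mem_empty_iff_false, iff_false, not_and,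
      Set.mem_setOf_eq, hS1def]
    intro h1 hle
    rw [h1] at hle
    have hgb : g1 ≤ b := by exact_mod_cast hle
    omega
  have hS0t : S0 ∩ {ω | G1 ω ≤ (t : ℕ∞)} = ∅ := by
    ext ω
    simp only [Set.mem_inter_iff, Set.mem_empty_iff_false, iff_false, not_and,
      Set.mem_setOf_eq, hS0def]
    exact fun h h' => h h'
  have hS0b : S0 ∩ {ω | G1 ω ≤ (b : ℕ∞)} = ∅ := by
    ext ω
    simp only [Set.mem_inter_iff, Set.mem_empty_iff_false, iff_false, not_and,
      Set.mem_setOf_eq, hS0def]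
    intro h h'
    exact h (h'.trans (by exact_mod_cast Nat.cast_le.2 hbt))
  -- group-level decompositions
  have e1t : ∫ ω in S1, Yr G1 G2 Y t ω ∂μ
      = (∫ ω in S1, Y t 0 0 ω ∂μ)
        + A1 * (μ (S1 ∩ {ω | G1 ω ≤ (t : ℕ∞)})).toReal
        + A2 * (μ (S1 ∩ {ω | G2 ω ≤ (t : ℕ∞)})).toReal :=
    DiDAux.group_integral G1 G2 μ Y T hmG1 hmG2 hG1mem hG2mem hYint hNA A1 A2 A
      hA1 hA2 hA hadd {(g1 : ℕ∞)} ht1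
  have e1b : ∫ ω in S1, Yr G1 G2 Y b ω ∂μ
      = (∫ ω in S1, Y b 0 0 ω ∂μ)
        + A1 * (μ (S1 ∩ {ω | G1 ω ≤ (b : ℕ∞)})).toReal
        + A2 * (μ (S1 ∩ {ω | G2 ω ≤ (b : ℕ∞)})).toReal :=
    DiDAux.group_integral G1 G2 μ Y T hmG1 hmG2 hG1mem hG2mem hYint hNA A1 A2 A
      hA1 hA2 hA hadd {(g1 : ℕ∞)} hb1
  have e0t : ∫ ω in S0, Yr G1 G2 Y t ω ∂μ
      = (∫ ω in S0, Y t 0 0 ω ∂μ)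
        + A1 * (μ (S0 ∩ {ω | G1 ω ≤ (t : ℕ∞)})).toReal
        + A2 * (μ (S0 ∩ {ω | G2 ω ≤ (t : ℕ∞)})).toReal :=
    DiDAux.group_integral G1 G2 μ Y T hmG1 hmG2 hG1mem hG2mem hYint hNA A1 A2 A
      hA1 hA2 hA hadd {x : ℕ∞ | ¬ x ≤ (t : ℕ∞)} ht1
  have e0b : ∫ ω in S0, Yr G1 G2 Y b ω ∂μ
      = (∫ ω in S0, Y b 0 0 ω ∂μ)
        + A1 * (μ (S0 ∩ {ω | G1 ω ≤ (b : ℕ∞)})).toReal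
        + A2 * (μ (S0 ∩ {ω | G2 ω ≤ (b : ℕ∞)})).toReal :=
    DiDAux.group_integral G1 G2 μ Y T hmG1 hmG2 hG1mem hG2mem hYint hNA A1 A2 A
      hA1 hA2 hA hadd {x : ℕ∞ | ¬ x ≤ (t : ℕ∞)} hb1
  rw [hS1t, hS1b, hS0t, hS0b] at *
  rw [measure_empty] at e1b e0t e0b
  simp only [ENNReal.toReal_zero, mul_zero, add_zero, zero_add] at e1b e0t e0b
  -- conditional-probability identities from independence
  have hq : ∀ s : ℕ, s = b ∨ s = t →
      ((μ S1).toReal⁻¹ * (μ (S1 ∩ {ω | G2 ω ≤ (s : ℕ∞)})).toReal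
        = (μ {ω | G2 ω ≤ (s : ℕ∞)}).toReal) ∧
      ((μ S0).toReal⁻¹ * (μ (S0 ∩ {ω | G2 ω ≤ (s : ℕ∞)})).toReal
        = (μ {ω | G2 ω ≤ (s : ℕ∞)}).toReal) := by
    intro s hsor
    obtain ⟨h1, h0⟩ := hind s hsor
    rw [DiDAux.cP_eq μ hS1m] at h1
    rw [DiDAux.cP_eq μ hS0m] at h0
    exact ⟨h1, h0⟩
  obtain ⟨hq1t, hq0t⟩ := hq t (Or.inr rfl)
  obtain ⟨hq1b, hq0b⟩ := hq b (Or.inl rfl)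
  -- integrability
  have hYrt : Integrable (Yr G1 G2 Y t) μ :=
    DiDAux.Yr_integrable G1 G2 μ Y T hmG1 hmG2 hG1mem hG2mem hYint t
  have hYrb : Integrable (Yr G1 G2 Y b) μ :=
    DiDAux.Yr_integrable G1 G2 μ Y T hmG1 hmG2 hG1mem hG2mem hYint b
  -- main computation
  rw [DiDAux.cE_sub μ hposG.ne' hYrt hYrb, DiDAux.cE_sub μ hposC.ne' hYrt hYrb,
    DiDAux.target_eq G1 G2 μ Y T hmG1 hmG2 hG1mem hG2mem hYint A1 hA1 g1 t hg1c
      (by exact_mod_cast hg1t) hposG]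
  rw [DiDAux.cE_sub μ hposG.ne' (hYint t 0 0) (hYint b 0 0),
      DiDAux.cE_sub μ hposC.ne' (hYint t 0 0) (hYint b 0 0)] at hPT
  rw [DiDAux.cE_eq μ S1 (Yr G1 G2 Y t), DiDAux.cE_eq μ S1 (Yr G1 G2 Y b),
      DiDAux.cE_eq μ S0 (Yr G1 G2 Y t), DiDAux.cE_eq μ S0 (Yr G1 G2 Y b),
      e1t, e1b, e0t, e0b]
  rw [DiDAux.cE_eq μ S1 (Y t 0 0), DiDAux.cE_eq μ S1 (Y b 0 0),
      DiDAux.cE_eq μ S0 (Y t 0 0), DiDAux.cE_eq μ S0 (Y b 0 0)] at hPT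
  have hmm1 : (μ S1).toReal⁻¹ * (μ S1).toReal = 1 := inv_mul_cancel₀ hm1
  linear_combination hPT + A2 * hq1t - A2 * hq1b - A2 * hq0t + A2 * hq0b + A1 * hmm1
end
end

section
/- Let t ∈ {1,…,T} with P(D¹_t=0) > 0. Under No Anticipation and Homogeneous effects, the control group's mean realized outcome decomposes as E[Y_t | D¹_t=0] = E[Y_t(0,0) | D¹_t=0] + A²·P(D²_t=1 | D¹_t=0). -/
/- Two-event staggered Difference-in-Differences setup (Callaway–Sant'Anna with a
confounding event).  Cohorts take values in `{2,…,T} ∪ {∞} ⊆ ℕ∞`; the potential-outcome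
index `0 : ℕ∞` codes "never treated by that event". -/

open MeasureTheory ProbabilityTheory

noncomputable section

open TwoEventDiD

/-! On the control group `G¹ > t` no unit has yet been hit by event 1. Split it into the cells
`{G¹ = g¹, G² = g²}`. By No Anticipation the mean realized outcome of a cell is that of
`Y_t(0,0)` if `t < g²`, and that of `Y_t(0,g²)` if `g² ≤ t`; in the latter case homogeneity of
`ATT²` adds exactly `A²`. Summing the cells, weighted by their mass, gives the decomposition. -/

namespace TwoEventDiD

variable {Ω : Type*} [MeasurableSpace Ω] {μ : Measure Ω}

theorem setIntegral_eq_sum_fiber {α : Type*} {G : Ω → α} (hG : (Set.range G).Finite)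
    (hmG : ∀ a, MeasurableSet (G ⁻¹' {a})) {C : Set Ω} (hC : MeasurableSet C) {f : Ω → ℝ}
    (hf : ∀ a, IntegrableOn f (G ⁻¹' {a} ∩ C) μ) :
    ∫ ω in C, f ω ∂μ = ∑ a ∈ hG.toFinset, ∫ ω in G ⁻¹' {a} ∩ C, f ω ∂μ := by
  have hcover : C = ⋃ a ∈ hG.toFinset, G ⁻¹' {a} ∩ C := by ext ω; simp
  conv_lhs => rw [hcover]
  refine integral_biUnion_finset _ (fun a _ => (hmG a).inter hC) ?_ fun a _ => hf a
  intro a _ b _ hab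
  exact ((Set.disjoint_singleton.2 hab).preimage G).mono Set.inter_subset_left
    Set.inter_subset_left

variable [IsFiniteMeasure μ]

theorem measureReal_mul_cE (A : Set Ω) (Z : Ω → ℝ) :
    μ.real A * cE μ A Z = ∫ ω in A, Z ω ∂μ := by
  rw [cE, ProbabilityTheory.cond, integral_smul_measure, smul_eq_mul, ENNReal.toReal_inv,
    ← measureReal_def, ← mul_assoc]
  rcases eq_or_ne (μ A) 0 with hA | hA
  · simp [Measure.restrict_eq_zero.2 hA]
  · rw [mul_inv_cancel₀ ((measureReal_eq_zero_iff (measure_ne_top μ A)).not.2 hA), one_mul]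

theorem setIntegral_eq_of_cE_eq {A : Set Ω} {Z W : Ω → ℝ} (h : cE μ A Z = cE μ A W) :
    ∫ ω in A, Z ω ∂μ = ∫ ω in A, W ω ∂μ := by
  rw [← measureReal_mul_cE, ← measureReal_mul_cE, h]

theorem measureReal_mul_cP {A : Set Ω} (hA : MeasurableSet A) (B : Set Ω) :
    μ.real A * cP μ A B = μ.real (A ∩ B) := by
  rw [cP, cond_apply hA, ENNReal.toReal_mul, ENNReal.toReal_inv, ← measureReal_def,
    ← measureReal_def, ← mul_assoc]
  rcases eq_or_ne (μ A) 0 with hA0 | hA0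
  · simp [Measure.real, hA0, measure_mono_null Set.inter_subset_left hA0]
  · rw [mul_inv_cancel₀ ((measureReal_eq_zero_iff (measure_ne_top μ A)).not.2 hA0), one_mul]

theorem setIntegral_add_indicator_const {s B : Set Ω} (hB : MeasurableSet B) {W : Ω → ℝ}
    (hW : IntegrableOn W s μ) (c : ℝ) :
    ∫ ω in s, (W ω + B.indicator (fun _ => c) ω) ∂μ
      = ∫ ω in s, W ω ∂μ + c * μ.real (s ∩ B) := by
  rw [integral_add hW ((integrable_const c).indicator hB).integrableOn,
    integral_indicator_const _ hB, measureReal_restrict_apply hB, Set.inter_comm, smul_eq_mul,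
    mul_comm]

theorem setOf_inCohort_finite (T : ℕ) : {g : ℕ∞ | InCohort T g}.Finite := by
  refine (((Set.finite_Iic T).image ((↑) : ℕ → ℕ∞)).insert ⊤).subset ?_
  rintro g (rfl | ⟨-, hgT⟩)
  · exact Set.mem_insert _ _
  · lift g to ℕ using ne_top_of_le_ne_top (ENat.natCast_ne_top T) hgT
    exact Set.mem_insert_of_mem _ ⟨g, by exact_mod_cast hgT, rfl⟩

variable {T : ℕ} {G1 G2 : Ω → ℕ∞} {Y : ℕ → ℕ∞ → ℕ∞ → Ω → ℝ} {A2 : ℝ} {t : ℕ}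

theorem setIntegral_cell_of_lt (hYint : ∀ (t : ℕ) (g1 g2 : ℕ∞), Integrable (Y t g1 g2) μ)
    (hA2 : ∀ (g1 g2 : ℕ∞) (t : ℕ), InCohort T g1 → InCohort T g2 →
      0 < μ {ω | G1 ω = g1 ∧ G2 ω = g2} → g2 ≤ (t : ℕ∞) → ATT2 μ G1 G2 Y g1 g2 t = A2)
    (hNA : NoAnticipation μ G1 G2 Y T) (ht1 : 1 ≤ t) {g1 g2 : ℕ∞}
    (hg1 : InCohort T g1) (hg2 : InCohort T g2) (hpos : 0 < μ {ω | G1 ω = g1 ∧ G2 ω = g2})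
    (htg1 : (t : ℕ∞) < g1) :
    ∫ ω in {ω | G1 ω = g1 ∧ G2 ω = g2}, Y t g1 g2 ω ∂μ
      = ∫ ω in {ω | G1 ω = g1 ∧ G2 ω = g2}, Y t 0 0 ω ∂μ
        + A2 * μ.real ({ω | G1 ω = g1 ∧ G2 ω = g2} ∩ {ω | G2 ω ≤ (t : ℕ∞)}) := by
  set cell := {ω | G1 ω = g1 ∧ G2 ω = g2}
  obtain ⟨hNA_before, -, hNA_second⟩ := hNA g1 g2 hg1 hg2 hpos t ht1 (lt_max_of_lt_left htg1)
  by_cases hg2t : g2 ≤ (t : ℕ∞)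
  · have hcellB : cell ∩ {ω | G2 ω ≤ (t : ℕ∞)} = cell :=
      Set.inter_eq_left.2 fun ω hω => show G2 ω ≤ (t : ℕ∞) from hω.2 ▸ hg2t
    have hATT2 : μ.real cell * A2 = ∫ ω in cell, (Y t 0 g2 ω - Y t 0 0 ω) ∂μ := by
      rw [← hA2 g1 g2 t hg1 hg2 hpos hg2t]
      exact measureReal_mul_cE cell _
    rw [integral_sub (hYint t 0 g2).integrableOn (hYint t 0 0).integrableOn] at hATT2
    rw [hcellB, setIntegral_eq_of_cE_eq (hNA_second ⟨hg2t, htg1⟩)]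
    linarith
  · have hcellB : cell ∩ {ω | G2 ω ≤ (t : ℕ∞)} = ∅ :=
      Set.eq_empty_of_forall_notMem fun ω hω => hg2t (hω.1.2 ▸ hω.2)
    rw [hcellB, measureReal_empty, mul_zero, add_zero]
    exact setIntegral_eq_of_cE_eq (hNA_before (lt_min htg1 (not_le.1 hg2t)))

theorem setIntegral_control_group (hG1mem : ∀ ω, InCohort T (G1 ω))
    (hG2mem : ∀ ω, InCohort T (G2 ω)) (hmG1 : ∀ g : ℕ∞, MeasurableSet {ω | G1 ω = g})
    (hmG2 : ∀ g : ℕ∞, MeasurableSet {ω | G2 ω = g})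
    (hYint : ∀ (t : ℕ) (g1 g2 : ℕ∞), Integrable (Y t g1 g2) μ)
    (hA2 : ∀ (g1 g2 : ℕ∞) (t : ℕ), InCohort T g1 → InCohort T g2 →
      0 < μ {ω | G1 ω = g1 ∧ G2 ω = g2} → g2 ≤ (t : ℕ∞) → ATT2 μ G1 G2 Y g1 g2 t = A2)
    (hNA : NoAnticipation μ G1 G2 Y T) (ht1 : 1 ≤ t)
    (hC : MeasurableSet {ω | ¬ G1 ω ≤ (t : ℕ∞)}) :
    ∫ ω in {ω | ¬ G1 ω ≤ (t : ℕ∞)}, Yr G1 G2 Y t ω ∂μ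
      = ∫ ω in {ω | ¬ G1 ω ≤ (t : ℕ∞)}, Y t 0 0 ω ∂μ
        + A2 * μ.real ({ω | ¬ G1 ω ≤ (t : ℕ∞)} ∩ {ω | G2 ω ≤ (t : ℕ∞)}) := by
  set C := {ω | ¬ G1 ω ≤ (t : ℕ∞)}
  set B := {ω | G2 ω ≤ (t : ℕ∞)}
  set G : Ω → ℕ∞ × ℕ∞ := fun ω => (G1 ω, G2 ω)
  have hB : MeasurableSet B :=
    measurable_to_countable' hmG2 (MeasurableSet.of_discrete (s := {g : ℕ∞ | g ≤ t}))
  have hmG (a : ℕ∞ × ℕ∞) : MeasurableSet (G ⁻¹' {a}) :=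
    (measurable_to_countable' hmG1).prodMk (measurable_to_countable' hmG2)
      (measurableSet_singleton a)
  have hrange : (Set.range G).Finite :=
    ((setOf_inCohort_finite T).prod (setOf_inCohort_finite T)).subset <| by
      rintro _ ⟨ω, rfl⟩
      exact ⟨hG1mem ω, hG2mem ω⟩
  have hfiber (g1 g2 : ℕ∞) : G ⁻¹' {(g1, g2)} = {ω | G1 ω = g1 ∧ G2 ω = g2} :=
    Set.ext fun _ => Prod.ext_iff
  have hYr (g1 g2 : ℕ∞) : Set.EqOn (Yr G1 G2 Y t) (Y t g1 g2) (G ⁻¹' {(g1, g2)}) := by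
    intro ω hω
    rw [hfiber] at hω
    simp only [Yr, hω.1, hω.2]
  have hmfiber (a : ℕ∞ × ℕ∞) : MeasurableSet (G ⁻¹' {a} ∩ C) :=
    (hmG a).inter hC
  have hint00 (s : Set Ω) : IntegrableOn (Y t 0 0) s μ := (hYint t 0 0).integrableOn
  have hintYr : ∀ a, IntegrableOn (Yr G1 G2 Y t) (G ⁻¹' {a} ∩ C) μ := by
    rintro ⟨g1, g2⟩
    exact (hYint t g1 g2).integrableOn.congr_fun
      (fun ω hω => (hYr g1 g2 hω.1).symm) (hmfiber _)
  have hint (a : ℕ∞ × ℕ∞) :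
      IntegrableOn (fun ω => Y t 0 0 ω + B.indicator (fun _ => A2) ω) (G ⁻¹' {a} ∩ C) μ :=
    (hint00 _).add ((integrable_const A2).indicator hB).integrableOn
  rw [← setIntegral_add_indicator_const hB (hint00 C),
    setIntegral_eq_sum_fiber hrange hmG hC hintYr, setIntegral_eq_sum_fiber hrange hmG hC hint]
  refine Finset.sum_congr rfl fun ⟨g1, g2⟩ _ => ?_
  by_cases hnull : μ (G ⁻¹' {(g1, g2)} ∩ C) = 0
  · rw [setIntegral_measure_zero _ hnull, setIntegral_measure_zero _ hnull]
  obtain ⟨ω, hωcell, hωC⟩ := nonempty_of_measure_ne_zero hnull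
  rw [hfiber] at hωcell
  have htg1 : (t : ℕ∞) < g1 := not_le.1 (hωcell.1 ▸ hωC)
  have hcellC : G ⁻¹' {(g1, g2)} ∩ C = {ω | G1 ω = g1 ∧ G2 ω = g2} := by
    rw [hfiber, Set.inter_eq_left]
    exact fun ω hω => not_le.2 (hω.1 ▸ htg1)
  rw [setIntegral_add_indicator_const hB (hint00 _),
    setIntegral_congr_fun (hmfiber _) fun ω hω => hYr g1 g2 hω.1, hcellC]
  exact setIntegral_cell_of_lt hYint hA2 hNA ht1 (hωcell.1 ▸ hG1mem ω) (hωcell.2 ▸ hG2mem ω)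
    (pos_of_ne_zero (hcellC ▸ hnull)) htg1

end TwoEventDiD

theorem control_group_mean_decomposition_general
    {Ω : Type*} [MeasurableSpace Ω] (μ : Measure Ω) [IsProbabilityMeasure μ]
    (T : ℕ)
    (G1 G2 : Ω → ℕ∞) (Y : ℕ → ℕ∞ → ℕ∞ → Ω → ℝ)
    (hG1mem : ∀ ω, InCohort T (G1 ω)) (hG2mem : ∀ ω, InCohort T (G2 ω))
    (hmG1 : ∀ g : ℕ∞, MeasurableSet {ω | G1 ω = g})
    (hmG2 : ∀ g : ℕ∞, MeasurableSet {ω | G2 ω = g})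
    (hYint : ∀ (t : ℕ) (g1 g2 : ℕ∞), Integrable (Y t g1 g2) μ)
    -- Homogeneous effects
    (A2 : ℝ)
    (hA2 : ∀ (g1 g2 : ℕ∞) (t : ℕ), InCohort T g1 → InCohort T g2 →
      0 < μ {ω | G1 ω = g1 ∧ G2 ω = g2} → g2 ≤ (t : ℕ∞) →
      ATT2 μ G1 G2 Y g1 g2 t = A2)
    -- No Anticipation
    (hNA : NoAnticipation μ G1 G2 Y T)
    -- the period `t ∈ {1,…,T}` with `P(D¹_t = 0) > 0`
    (t : ℕ) (ht1 : 1 ≤ t)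
    (hposC : 0 < μ {ω | ¬ G1 ω ≤ (t : ℕ∞)}) :
    cE μ {ω | ¬ G1 ω ≤ (t : ℕ∞)} (Yr G1 G2 Y t)
    = cE μ {ω | ¬ G1 ω ≤ (t : ℕ∞)} (Y t 0 0)
      + A2 * cP μ {ω | ¬ G1 ω ≤ (t : ℕ∞)} {ω | G2 ω ≤ (t : ℕ∞)} := by
  have hC : MeasurableSet {ω | ¬ G1 ω ≤ (t : ℕ∞)} :=
    measurable_to_countable' hmG1 (MeasurableSet.of_discrete (s := {g : ℕ∞ | ¬ g ≤ t}))
  have hCpos : μ.real {ω | ¬ G1 ω ≤ (t : ℕ∞)} ≠ 0 :=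
    ((measureReal_eq_zero_iff (measure_ne_top μ _)).not.2 hposC.ne')
  apply mul_left_cancel₀ hCpos
  rw [mul_add, measureReal_mul_cE, measureReal_mul_cE, mul_left_comm, measureReal_mul_cP hC]
  exact setIntegral_control_group hG1mem hG2mem hmG1 hmG2 hYint hA2 hNA ht1 hC

/-- decomposition of the control group's mean realized outcome. -/
theorem control_group_mean_decomposition
    {Ω : Type*} [MeasurableSpace Ω] (μ : Measure Ω) [IsProbabilityMeasure μ]
    (T : ℕ) (hT : 2 ≤ T)
    (G1 G2 : Ω → ℕ∞) (Y : ℕ → ℕ∞ → ℕ∞ → Ω → ℝ)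
    (hG1mem : ∀ ω, InCohort T (G1 ω)) (hG2mem : ∀ ω, InCohort T (G2 ω))
    (hmG1 : ∀ g : ℕ∞, MeasurableSet {ω | G1 ω = g})
    (hmG2 : ∀ g : ℕ∞, MeasurableSet {ω | G2 ω = g})
    (hYint : ∀ (t : ℕ) (g1 g2 : ℕ∞), Integrable (Y t g1 g2) μ)
    (hYtop1 : ∀ (t : ℕ) (g2 : ℕ∞), Y t ⊤ g2 = Y t 0 g2)
    (hYtop2 : ∀ (t : ℕ) (g1 : ℕ∞), Y t g1 ⊤ = Y t g1 0)
    -- Homogeneous effects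
    (A1 A2 A : ℝ)
    (hA1 : ∀ (g1 g2 : ℕ∞) (t : ℕ), InCohort T g1 → InCohort T g2 →
      0 < μ {ω | G1 ω = g1 ∧ G2 ω = g2} → g1 ≤ (t : ℕ∞) →
      ATT1 μ G1 G2 Y g1 g2 t = A1)
    (hA2 : ∀ (g1 g2 : ℕ∞) (t : ℕ), InCohort T g1 → InCohort T g2 →
      0 < μ {ω | G1 ω = g1 ∧ G2 ω = g2} → g2 ≤ (t : ℕ∞) →
      ATT2 μ G1 G2 Y g1 g2 t = A2)
    (hA : ∀ (g1 g2 : ℕ∞) (t : ℕ), InCohort T g1 → InCohort T g2 →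
      0 < μ {ω | G1 ω = g1 ∧ G2 ω = g2} → g1 ≤ (t : ℕ∞) → g2 ≤ (t : ℕ∞) →
      ATT μ G1 G2 Y g1 g2 t = A)
    -- No Anticipation
    (hNA : NoAnticipation μ G1 G2 Y T)
    -- the period `t ∈ {1,…,T}` with `P(D¹_t = 0) > 0`
    (t : ℕ) (ht1 : 1 ≤ t) (htT : t ≤ T)
    (hposC : 0 < μ {ω | ¬ G1 ω ≤ (t : ℕ∞)}) :
    cE μ {ω | ¬ G1 ω ≤ (t : ℕ∞)} (Yr G1 G2 Y t)
    = cE μ {ω | ¬ G1 ω ≤ (t : ℕ∞)} (Y t 0 0)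
      + A2 * cP μ {ω | ¬ G1 ω ≤ (t : ℕ∞)} {ω | G2 ω ≤ (t : ℕ∞)} :=
  control_group_mean_decomposition_general μ T G1 G2 Y hG1mem hG2mem hmG1 hmG2 hYint A2 hA2 hNA t
    ht1 hposC
end
end

section
/- Suppose Conditional No Anticipation holds. Then the combined event satisfies the single-event no-anticipation property: for every g ∈ {2,…,T} with P(G=g) > 0 and every t with 1 ≤ t < g, E[Y_t(g) | X, G=g] = E[Y_t(0,0) | X, G=g] almost surely. -/
/- Two-event staggered Difference-in-Differences setup (Callaway–Sant'Anna with a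
confounding event).  Cohorts take values in `{2,…,T} ∪ {∞} ⊆ ℕ∞`; the potential-outcome
index `0 : ℕ∞` codes "never treated by that event". -/

open MeasureTheory ProbabilityTheory

noncomputable section

namespace TwoEventDiD

variable {Ω : Type*} [MeasurableSpace Ω]

/-- The σ-algebra `σ(X)` generated by the covariates. -/
def mX {K : ℕ} (X : Ω → Fin K → ℝ) : MeasurableSpace Ω :=
  MeasurableSpace.comap X inferInstance

/-- Conditional No Anticipation (conditional on covariates `X`). -/
def CondNoAnticipation (μ : Measure Ω) (G1 G2 : Ω → ℕ∞) (Y : ℕ → ℕ∞ → ℕ∞ → Ω → ℝ)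
    (T : ℕ) {K : ℕ} (X : Ω → Fin K → ℝ) : Prop :=
  ∀ g1 g2 : ℕ∞, InCohort T g1 → InCohort T g2 →
    0 < μ {ω | G1 ω = g1 ∧ G2 ω = g2} →
    ∀ t : ℕ, 1 ≤ t → (t : ℕ∞) < max g1 g2 →
      ((t : ℕ∞) < min g1 g2 →
        (μ[|{ω | G1 ω = g1 ∧ G2 ω = g2}])[Y t g1 g2 | mX X]
          =ᵐ[μ[|{ω | G1 ω = g1 ∧ G2 ω = g2}]]
        (μ[|{ω | G1 ω = g1 ∧ G2 ω = g2}])[Y t 0 0 | mX X]) ∧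
      (g1 ≤ (t : ℕ∞) ∧ (t : ℕ∞) < g2 →
        (μ[|{ω | G1 ω = g1 ∧ G2 ω = g2}])[Y t g1 g2 | mX X]
          =ᵐ[μ[|{ω | G1 ω = g1 ∧ G2 ω = g2}]]
        (μ[|{ω | G1 ω = g1 ∧ G2 ω = g2}])[Y t g1 0 | mX X]) ∧
      (g2 ≤ (t : ℕ∞) ∧ (t : ℕ∞) < g1 →
        (μ[|{ω | G1 ω = g1 ∧ G2 ω = g2}])[Y t g1 g2 | mX X]
          =ᵐ[μ[|{ω | G1 ω = g1 ∧ G2 ω = g2}]]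
        (μ[|{ω | G1 ω = g1 ∧ G2 ω = g2}])[Y t 0 g2 | mX X])

/-- Conditional parallel trends with respect to the never-treated: a common measurable
function of the covariates is a version of both conditional mean untreated trends. -/
def CondPTNever (μ : Measure Ω) (G1 G2 : Ω → ℕ∞) (Y : ℕ → ℕ∞ → ℕ∞ → Ω → ℝ)
    (T : ℕ) {K : ℕ} (X : Ω → Fin K → ℝ) : Prop :=
  ∀ g1 g2 : ℕ∞, InCohort T g1 → InCohort T g2 → ¬(g1 = ⊤ ∧ g2 = ⊤) →
    0 < μ {ω | G1 ω = g1 ∧ G2 ω = g2} →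
    0 < μ {ω | G1 ω = ⊤ ∧ G2 ω = ⊤} →
    ∀ t : ℕ, min g1 g2 ≤ (t : ℕ∞) → t ≤ T →
      ∃ h : (Fin K → ℝ) → ℝ, Measurable h ∧
        (fun ω => h (X ω))
          =ᵐ[μ[|{ω | G1 ω = g1 ∧ G2 ω = g2}]]
          (μ[|{ω | G1 ω = g1 ∧ G2 ω = g2}])[fun ω => Y t 0 0 ω - Y (t - 1) 0 0 ω | mX X] ∧
        (fun ω => h (X ω))
          =ᵐ[μ[|{ω | G1 ω = ⊤ ∧ G2 ω = ⊤}]]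
          (μ[|{ω | G1 ω = ⊤ ∧ G2 ω = ⊤}])[fun ω => Y t 0 0 ω - Y (t - 1) 0 0 ω | mX X]

/-- Conditional parallel trends with respect to the not-yet-treated. -/
def CondPTNyt (μ : Measure Ω) (G1 G2 : Ω → ℕ∞) (Y : ℕ → ℕ∞ → ℕ∞ → Ω → ℝ)
    (T : ℕ) {K : ℕ} (X : Ω → Fin K → ℝ) : Prop :=
  ∀ g1 g2 : ℕ∞, InCohort T g1 → InCohort T g2 → ¬(g1 = ⊤ ∧ g2 = ⊤) →
    0 < μ {ω | G1 ω = g1 ∧ G2 ω = g2} →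
    ∀ s t : ℕ, min g1 g2 ≤ (t : ℕ∞) → t ≤ s → s ≤ T →
      0 < μ {ω | ¬ G1 ω ≤ (s : ℕ∞) ∧ ¬ G2 ω ≤ (s : ℕ∞) ∧ G1 ω ≠ g1 ∧ G2 ω ≠ g2} →
      ∃ h : (Fin K → ℝ) → ℝ, Measurable h ∧
        (fun ω => h (X ω))
          =ᵐ[μ[|{ω | G1 ω = g1 ∧ G2 ω = g2}]]
          (μ[|{ω | G1 ω = g1 ∧ G2 ω = g2}])[fun ω => Y t 0 0 ω - Y (t - 1) 0 0 ω | mX X] ∧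
        (fun ω => h (X ω))
          =ᵐ[μ[|{ω | ¬ G1 ω ≤ (s : ℕ∞) ∧ ¬ G2 ω ≤ (s : ℕ∞) ∧ G1 ω ≠ g1 ∧ G2 ω ≠ g2}]]
          (μ[|{ω | ¬ G1 ω ≤ (s : ℕ∞) ∧ ¬ G2 ω ≤ (s : ℕ∞) ∧ G1 ω ≠ g1 ∧ G2 ω ≠ g2}])[
            fun ω => Y t 0 0 ω - Y (t - 1) 0 0 ω | mX X]

end TwoEventDiD

open TwoEventDiD

/-! On `{G = g}` the cells `{G¹ = g¹, G² = g²}` with `min(g¹,g²) = g` partition the event,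
and for `t < g = min(g¹,g²)` conditional no anticipation identifies `Y_t(g¹,g²)` with
`Y_t(0,0)` cell by cell. Conditional expectations given `σ(X)` under `P(·|A)` are
characterised by the integrals `∫_{s ∩ A}` over `s ∈ σ(X)`, and these integrals add up over
the finitely many cells. -/

section CondMeasure

variable {Ω : Type*} {m m₀ : MeasurableSpace Ω} {μ : Measure Ω} {A s : Set Ω}
  {f g : Ω → ℝ}

lemma setIntegral_cond (hs : MeasurableSet s) (f : Ω → ℝ) :
    ∫ x in s, f x ∂μ[|A] = (μ A)⁻¹.toReal * ∫ x in s ∩ A, f x ∂μ := by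
  rw [ProbabilityTheory.cond, Measure.restrict_smul, Measure.restrict_restrict hs,
    integral_smul_measure, smul_eq_mul]

lemma integrable_cond (hA : μ A ≠ 0) (hf : IntegrableOn f A μ) : Integrable f μ[|A] :=
  hf.smul_measure (ENNReal.inv_ne_top.mpr hA)

theorem condExp_cond_ae_eq_iff [IsFiniteMeasure μ] (hm : m ≤ m₀) (hA : μ A ≠ 0)
    (hf : IntegrableOn f A μ) (hg : IntegrableOn g A μ) :
    μ[|A][f|m] =ᵐ[μ[|A]] μ[|A][g|m] ↔
      ∀ s, MeasurableSet[m] s → ∫ x in s ∩ A, f x ∂μ = ∫ x in s ∩ A, g x ∂μ := by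
  have := cond_isProbabilityMeasure hA
  have hfA := integrable_cond hA hf
  have hgA := integrable_cond hA hg
  have hc : (μ A)⁻¹.toReal ≠ 0 := ENNReal.toReal_ne_zero.mpr
    ⟨ENNReal.inv_ne_zero.mpr (measure_ne_top μ A), ENNReal.inv_ne_top.mpr hA⟩
  calc μ[|A][f|m] =ᵐ[μ[|A]] μ[|A][g|m]
      ↔ ∀ s, MeasurableSet[m] s → ∫ x in s, f x ∂μ[|A] = ∫ x in s, g x ∂μ[|A] := by
        refine ⟨fun h s hs => ?_, fun h => ?_⟩
        · rw [← setIntegral_condExp hm hfA hs, ← setIntegral_condExp hm hgA hs]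
          exact integral_congr_ae (ae_restrict_of_ae h)
        · refine ae_eq_condExp_of_forall_setIntegral_eq hm hgA
            (fun s _ _ => integrable_condExp.integrableOn) (fun s hs _ => ?_)
            stronglyMeasurable_condExp.aestronglyMeasurable
          rw [setIntegral_condExp hm hfA hs, h s hs]
    _ ↔ _ := forall₂_congr fun s hs => by
        rw [setIntegral_cond (hm s hs), setIntegral_cond (hm s hs), mul_right_inj' hc]

end CondMeasure

section Fibres

variable {Ω β : Type*} (Z : Ω → β) {S : Finset β} (F : β → Ω → ℝ)

lemma sum_indicator_fiber (hZS : ∀ ω, Z ω ∈ S) (ω : Ω) :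
    ∑ b ∈ S, (Z ⁻¹' {b}).indicator (F b) ω = F (Z ω) ω := by
  rw [Finset.sum_eq_single_of_mem (Z ω) (hZS ω)]
  · exact Set.indicator_of_mem (Set.mem_preimage.mpr rfl) _
  · exact fun b _ hb => Set.indicator_of_notMem (fun h => hb h.symm) _

variable {Z F} [MeasurableSpace Ω] {μ : Measure Ω}

lemma integrable_comp_fiber (hZS : ∀ ω, Z ω ∈ S) (hZ : ∀ b, MeasurableSet (Z ⁻¹' {b}))
    (hF : ∀ b ∈ S, Integrable (F b) μ) : Integrable (fun ω => F (Z ω) ω) μ := by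
  simp_rw [← sum_indicator_fiber Z F hZS]
  exact integrable_finsetSum _ fun b hb => (hF b hb).indicator (hZ b)

lemma setIntegral_comp_eq_sum_fiber (hZS : ∀ ω, Z ω ∈ S)
    (hZ : ∀ b, MeasurableSet (Z ⁻¹' {b})) (hF : ∀ b ∈ S, Integrable (F b) μ)
    (B : Set Ω) :
    ∫ ω in B, F (Z ω) ω ∂μ = ∑ b ∈ S, ∫ ω in B ∩ Z ⁻¹' {b}, F b ω ∂μ := by
  simp_rw [← sum_indicator_fiber Z F hZS]
  rw [integral_finsetSum _ fun b hb => ((hF b hb).indicator (hZ b)).integrableOn]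
  exact Finset.sum_congr rfl fun b _ => setIntegral_indicator (hZ b)

end Fibres

namespace TwoEventDiD

def cohorts (T : ℕ) : Finset ℕ∞ := insert ⊤ ((Finset.Icc 2 T).image (↑))

lemma mem_cohorts {T : ℕ} {g : ℕ∞} : g ∈ cohorts T ↔ InCohort T g := by
  simp only [cohorts, InCohort, Finset.mem_insert, Finset.mem_image, Finset.mem_Icc]
  refine or_congr_right ⟨?_, fun ⟨h2, hT⟩ => ?_⟩
  · rintro ⟨k, ⟨h2, hT⟩, rfl⟩
    exact ⟨by exact_mod_cast h2, by exact_mod_cast hT⟩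
  · lift g to ℕ using ne_top_of_le_ne_top (ENat.natCast_ne_top T) hT
    exact ⟨g, ⟨by exact_mod_cast h2, by exact_mod_cast hT⟩, rfl⟩

lemma CondNoAnticipation.setIntegral_cell_eq {Ω : Type*} [MeasurableSpace Ω]
    {μ : Measure Ω} [IsFiniteMeasure μ] {G1 G2 : Ω → ℕ∞} {Y : ℕ → ℕ∞ → ℕ∞ → Ω → ℝ}
    {T K : ℕ} {X : Ω → Fin K → ℝ} (hNA : CondNoAnticipation μ G1 G2 Y T X)
    (hX : Measurable X) (hYint : ∀ t g1 g2, Integrable (Y t g1 g2) μ) {g1 g2 : ℕ∞}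
    (h1 : InCohort T g1) (h2 : InCohort T g2) {t : ℕ} (ht : 1 ≤ t)
    (htg : (t : ℕ∞) < min g1 g2) {s : Set Ω} (hs : MeasurableSet[mX X] s) :
    ∫ ω in s ∩ {ω | G1 ω = g1 ∧ G2 ω = g2}, Y t g1 g2 ω ∂μ
      = ∫ ω in s ∩ {ω | G1 ω = g1 ∧ G2 ω = g2}, Y t 0 0 ω ∂μ := by
  by_cases h0 : μ {ω | G1 ω = g1 ∧ G2 ω = g2} = 0
  · rw [Measure.restrict_eq_zero.mpr (measure_mono_null Set.inter_subset_right h0)]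
    simp
  · exact (condExp_cond_ae_eq_iff hX.comap_le h0 (hYint t g1 g2).integrableOn
      (hYint t 0 0).integrableOn).mp
      ((hNA g1 g2 h1 h2 (pos_iff_ne_zero.mpr h0) t ht (htg.trans_le min_le_max)).1 htg) s hs

end TwoEventDiD

theorem combined_event_no_anticipation_general
    {Ω : Type*} [MeasurableSpace Ω] (μ : Measure Ω) [IsProbabilityMeasure μ]
    (T : ℕ)
    (G1 G2 : Ω → ℕ∞) (Y : ℕ → ℕ∞ → ℕ∞ → Ω → ℝ)
    (hG1mem : ∀ ω, InCohort T (G1 ω)) (hG2mem : ∀ ω, InCohort T (G2 ω))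
    (hmG1 : ∀ g : ℕ∞, MeasurableSet {ω | G1 ω = g})
    (hmG2 : ∀ g : ℕ∞, MeasurableSet {ω | G2 ω = g})
    (hYint : ∀ (t : ℕ) (g1 g2 : ℕ∞), Integrable (Y t g1 g2) μ)
    {K : ℕ} (X : Ω → Fin K → ℝ) (hX : Measurable X)
    (hNA : CondNoAnticipation μ G1 G2 Y T X) :
    ∀ g : ℕ, 2 ≤ g → g ≤ T →
      0 < μ {ω | min (G1 ω) (G2 ω) = (g : ℕ∞)} →
      ∀ t : ℕ, 1 ≤ t → t < g →
        (μ[|{ω | min (G1 ω) (G2 ω) = (g : ℕ∞)}])[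
            (fun ω => if min (G1 ω) (G2 ω) = (g : ℕ∞) then Y t (G1 ω) (G2 ω) ω
                      else Y t (g : ℕ∞) (g : ℕ∞) ω) | mX X]
          =ᵐ[μ[|{ω | min (G1 ω) (G2 ω) = (g : ℕ∞)}]]
        (μ[|{ω | min (G1 ω) (G2 ω) = (g : ℕ∞)}])[Y t 0 0 | mX X] := by
  intro g _ _ hA t ht htg
  set A := {ω | min (G1 ω) (G2 ω) = (g : ℕ∞)}
  let Z : Ω → ℕ∞ × ℕ∞ := fun ω => (G1 ω, G2 ω)
  let F : ℕ∞ × ℕ∞ → Ω → ℝ := fun p ω =>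
    if min p.1 p.2 = (g : ℕ∞) then Y t p.1 p.2 ω else Y t g g ω
  have hZS (ω : Ω) : Z ω ∈ cohorts T ×ˢ cohorts T :=
    Finset.mem_product.mpr ⟨mem_cohorts.mpr (hG1mem ω), mem_cohorts.mpr (hG2mem ω)⟩
  have hcell (p : ℕ∞ × ℕ∞) : Z ⁻¹' {p} = {ω | G1 ω = p.1 ∧ G2 ω = p.2} := by
    ext ω; simp [Z, Prod.ext_iff]
  have hZ (p : ℕ∞ × ℕ∞) : MeasurableSet (Z ⁻¹' {p}) :=
    hcell p ▸ (hmG1 p.1).inter (hmG2 p.2)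
  have hF (p : ℕ∞ × ℕ∞) : Integrable (F p) μ := by
    by_cases hp : min p.1 p.2 = (g : ℕ∞) <;> simp only [F, hp, if_true, if_false]
    all_goals apply hYint
  refine (condExp_cond_ae_eq_iff hX.comap_le hA.ne' (integrable_comp_fiber hZS hZ
    fun p _ => hF p).integrableOn (hYint t 0 0).integrableOn).mpr fun s hs => ?_
  rw [setIntegral_comp_eq_sum_fiber hZS hZ (fun p _ => hF p),
    setIntegral_comp_eq_sum_fiber (F := fun _ => Y t 0 0) hZS hZ (fun _ _ => hYint t 0 0)]
  refine Finset.sum_congr rfl fun p hp => ?_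
  by_cases hpg : min p.1 p.2 = (g : ℕ∞)
  · have hcellA : Z ⁻¹' {p} ⊆ A := fun ω hω => by
      show min (Z ω).1 (Z ω).2 = _
      rwa [Set.mem_singleton_iff.mp hω]
    obtain ⟨h1, h2⟩ := Finset.mem_product.mp hp
    rw [Set.inter_assoc, Set.inter_eq_right.mpr hcellA, hcell]
    simp only [F, hpg, if_true]
    exact hNA.setIntegral_cell_eq hX hYint (mem_cohorts.mp h1) (mem_cohorts.mp h2) ht
      (hpg ▸ by exact_mod_cast htg) hs
  · have hempty : s ∩ A ∩ Z ⁻¹' {p} = ∅ :=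
      Set.eq_empty_of_forall_notMem fun ω ⟨⟨_, hωA⟩, hω⟩ => hpg (hω ▸ hωA)
    simp [hempty]

/-- Lemma 1, part CS3: conditional no anticipation for the two events
implies single-event no anticipation for the combined event `G = min(G¹,G²)`. -/
theorem combined_event_no_anticipation
    {Ω : Type*} [MeasurableSpace Ω] (μ : Measure Ω) [IsProbabilityMeasure μ]
    (T : ℕ) (hT : 2 ≤ T)
    (G1 G2 : Ω → ℕ∞) (Y : ℕ → ℕ∞ → ℕ∞ → Ω → ℝ)
    (hG1mem : ∀ ω, InCohort T (G1 ω)) (hG2mem : ∀ ω, InCohort T (G2 ω))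
    (hmG1 : ∀ g : ℕ∞, MeasurableSet {ω | G1 ω = g})
    (hmG2 : ∀ g : ℕ∞, MeasurableSet {ω | G2 ω = g})
    (hYint : ∀ (t : ℕ) (g1 g2 : ℕ∞), Integrable (Y t g1 g2) μ)
    (hYtop1 : ∀ (t : ℕ) (g2 : ℕ∞), Y t ⊤ g2 = Y t 0 g2)
    (hYtop2 : ∀ (t : ℕ) (g1 : ℕ∞), Y t g1 ⊤ = Y t g1 0)
    {K : ℕ} (X : Ω → Fin K → ℝ) (hX : Measurable X)
    (hNA : CondNoAnticipation μ G1 G2 Y T X) :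
    ∀ g : ℕ, 2 ≤ g → g ≤ T →
      0 < μ {ω | min (G1 ω) (G2 ω) = (g : ℕ∞)} →
      ∀ t : ℕ, 1 ≤ t → t < g →
        (μ[|{ω | min (G1 ω) (G2 ω) = (g : ℕ∞)}])[
            (fun ω => if min (G1 ω) (G2 ω) = (g : ℕ∞) then Y t (G1 ω) (G2 ω) ω
                      else Y t (g : ℕ∞) (g : ℕ∞) ω) | mX X]
          =ᵐ[μ[|{ω | min (G1 ω) (G2 ω) = (g : ℕ∞)}]]
        (μ[|{ω | min (G1 ω) (G2 ω) = (g : ℕ∞)}])[Y t 0 0 | mX X] :=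
  combined_event_no_anticipation_general μ T G1 G2 Y hG1mem hG2mem hmG1 hmG2 hYint X hX hNA
end
end

section
/- Let g¹, g² ∈ {2,…,T} ∪ {∞} with g := min(g¹,g²) finite, and let t with g ≤ t ≤ T. Assume P(W=1) > 0, P(A) > 0 and P_W(A^CS) > 0, where A := {G¹=g¹, G²=g²} ∪ ({D_t=0} ∩ {G¹=g¹, G²=g²}ᶜ) and A^CS := {G=g} ∪ ({D_t=0} ∩ {G≠g}). Then A ⊆ {W=1}, and the two propensity scores coincide: there are versions of p^CS(X) := P_W(G=g | X, A^CS) and p(X) := P(G¹=g¹, G²=g² | X, A) that are equal P-almost surely on the event A. -/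
/- Two-event staggered Difference-in-Differences setup (Callaway–Sant'Anna with a
confounding event).  Cohorts take values in `{2,…,T} ∪ {∞} ⊆ ℕ∞`; the potential-outcome
index `0 : ℕ∞` codes "never treated by that event". -/

open MeasureTheory ProbabilityTheory

noncomputable section

namespace TwoEventDiD

variable {Ω : Type*} [MeasurableSpace Ω]

/-- The event `{W = 1} = {G ≠ g} ∪ {G¹=g¹, G²=g²}` selecting the cohort of interest. -/
def Wset (G1 G2 : Ω → ℕ∞) (g1 g2 : ℕ∞) (g : ℕ) : Set Ω :=
  {ω | min (G1 ω) (G2 ω) ≠ (g : ℕ∞) ∨ (G1 ω = g1 ∧ G2 ω = g2)}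

/-- Two-event propensity-score conditioning event
`A = {G¹=g¹, G²=g²} ∪ ({D_t=0} ∩ {G¹=g¹, G²=g²}ᶜ)`. -/
def evA (G1 G2 : Ω → ℕ∞) (g1 g2 : ℕ∞) (t : ℕ) : Set Ω :=
  {ω | (G1 ω = g1 ∧ G2 ω = g2) ∨
    (¬ min (G1 ω) (G2 ω) ≤ (t : ℕ∞) ∧ ¬(G1 ω = g1 ∧ G2 ω = g2))}

/-- Combined-event propensity-score conditioning event
`A^CS = {G=g} ∪ ({D_t=0} ∩ {G≠g})`. -/
def evACS (G1 G2 : Ω → ℕ∞) (g : ℕ) (t : ℕ) : Set Ω :=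
  {ω | min (G1 ω) (G2 ω) = (g : ℕ∞) ∨
    (¬ min (G1 ω) (G2 ω) ≤ (t : ℕ∞) ∧ min (G1 ω) (G2 ω) ≠ (g : ℕ∞))}

/-- The comparison-group event `{D_t = 0} ∩ {(G¹,G²) ≠ (g¹,g²)}` for the two events. -/
def evComp (G1 G2 : Ω → ℕ∞) (g1 g2 : ℕ∞) (t : ℕ) : Set Ω :=
  {ω | ¬ min (G1 ω) (G2 ω) ≤ (t : ℕ∞) ∧ ¬(G1 ω = g1 ∧ G2 ω = g2)}

/-- The comparison-group event `{D_t = 0} ∩ {G ≠ g}` for the combined event. -/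
def evCompCS (G1 G2 : Ω → ℕ∞) (g : ℕ) (t : ℕ) : Set Ω :=
  {ω | ¬ min (G1 ω) (G2 ω) ≤ (t : ℕ∞) ∧ min (G1 ω) (G2 ω) ≠ (g : ℕ∞)}

/-- Inverse-probability weight `h(X)·1_C / (1 − h(X))` built from a propensity score
`h ∘ X` and a comparison event `C`. -/
def ipw {K : ℕ} (X : Ω → Fin K → ℝ) (h : (Fin K → ℝ) → ℝ) (C : Set Ω) : Ω → ℝ :=
  fun ω => h (X ω) * C.indicator (fun _ => (1 : ℝ)) ω / (1 - h (X ω))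

end TwoEventDiD

open TwoEventDiD


namespace TwoEventDiD
section AuxForStatement9
open Filter
variable {Ω : Type*} [MeasurableSpace Ω]

lemma factor_simple {K : ℕ} (X : Ω → Fin K → ℝ) (s : @SimpleFunc Ω (mX X) ℝ) :
    ∃ h : (Fin K → ℝ) → ℝ, Measurable h ∧ ∀ ω, s ω = h (X ω) := by
  have hfib : ∀ c : ℝ, ∃ B : Set (Fin K → ℝ), MeasurableSet B ∧ X ⁻¹' B = s ⁻¹' {c} :=
    fun c => @SimpleFunc.measurableSet_fiber Ω ℝ (mX X) s c
  choose B hB hBpre using hfib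
  classical
  refine ⟨fun x => ∑ c ∈ (@SimpleFunc.range Ω ℝ (mX X) s),
      Set.indicator (B c) (fun _ => c) x, ?_, ?_⟩
  · exact Finset.measurable_sum _ fun c _ => (measurable_const).indicator (hB c)
  · intro ω
    have key : ∀ c, Set.indicator (B c) (fun _ => c) (X ω) =
        Set.indicator (s ⁻¹' {c}) (fun _ => c) ω := by
      intro c
      by_cases hc : ω ∈ s ⁻¹' {c}
      · rw [Set.indicator_of_mem hc, Set.indicator_of_mem (by rw [← hBpre] at hc; exact hc)]
      · rw [Set.indicator_of_notMem hc,
          Set.indicator_of_notMem (by rw [← hBpre] at hc; exact hc)]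
    simp only [key]
    rw [Finset.sum_eq_single (s ω)]
    · have hm : ω ∈ ⇑s ⁻¹' {s ω} := rfl
      rw [Set.indicator_of_mem hm]
    · intro b _ hb
      have hm : ω ∉ ⇑s ⁻¹' {b} := fun hmem => hb (Set.mem_singleton_iff.mp hmem).symm
      rw [Set.indicator_of_notMem hm]
    · intro h; exact absurd (@SimpleFunc.mem_range_self Ω ℝ (mX X) s ω) h

lemma factor_stronglyMeasurable {K : ℕ} (X : Ω → Fin K → ℝ) {f : Ω → ℝ}
    (hf : StronglyMeasurable[mX X] f) :
    ∃ h : (Fin K → ℝ) → ℝ, Measurable h ∧ ∀ ω, f ω = h (X ω) := by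
  classical
  obtain ⟨u, hu⟩ := hf
  choose hn hmn hfac using fun n => factor_simple X (u n)
  set S : Set (Fin K → ℝ) :=
    {x | ∃ c, Tendsto (fun n => hn n x) atTop (nhds c)} with hS
  have hSm : MeasurableSet S := measurableSet_exists_tendsto hmn
  set h : (Fin K → ℝ) → ℝ := fun x =>
    if x ∈ S then limUnder atTop (fun n => hn n x) else 0 with hh
  have hk : ∀ x, Tendsto (fun n => S.piecewise (hn n) (fun _ => 0) x)
      atTop (nhds (h x)) := by
    intro x
    by_cases hx : x ∈ S
    · obtain ⟨c, hc⟩ := hx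
      have hxS : x ∈ S := ⟨c, hc⟩
      have : h x = c := by
        simp only [hh, if_pos hxS]
        exact hc.limUnder_eq
      rw [this]
      simpa [Set.piecewise, hxS] using hc
    · simp only [hh, if_neg hx]
      simpa [Set.piecewise, hx] using tendsto_const_nhds
  have hhm : Measurable h := by
    have hmp : ∀ n, Measurable (S.piecewise (hn n) (fun _ => 0)) :=
      fun n => Measurable.piecewise hSm (hmn n) measurable_const
    exact measurable_of_tendsto_metrizable hmp (tendsto_pi_nhds.mpr hk)
  refine ⟨h, hhm, fun ω => ?_⟩
  have hconv : Tendsto (fun n => hn n (X ω)) atTop (nhds (f ω)) := by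
    have h2 := hu ω
    have h3 : (fun n => hn n (X ω)) = fun n => u n ω := by
      funext n; exact (hfac n ω).symm
    rw [h3]; exact h2
  have hmem : X ω ∈ S := ⟨f ω, hconv⟩
  simp only [hh, if_pos hmem]
  exact hconv.limUnder_eq.symm


lemma measSet2 {G1 G2 : Ω → ℕ∞}
    (hmG1 : ∀ g : ℕ∞, MeasurableSet {ω | G1 ω = g})
    (hmG2 : ∀ g : ℕ∞, MeasurableSet {ω | G2 ω = g})
    (p : ℕ∞ → ℕ∞ → Prop) : MeasurableSet {ω | p (G1 ω) (G2 ω)} := by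
  have hrw : {ω | p (G1 ω) (G2 ω)} =
      ⋃ (a : ℕ∞) (b : ℕ∞) (_ : p a b), ({ω | G1 ω = a} ∩ {ω | G2 ω = b}) := by
    ext ω
    simp only [Set.mem_setOf_eq, Set.mem_iUnion, Set.mem_inter_iff]
    constructor
    · intro h; exact ⟨G1 ω, G2 ω, h, rfl, rfl⟩
    · rintro ⟨a, b, hp, h1, h2⟩; rwa [h1, h2]
  rw [hrw]
  exact MeasurableSet.iUnion fun a => MeasurableSet.iUnion fun b =>
    MeasurableSet.iUnion fun _ => (hmG1 a).inter (hmG2 b)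

end AuxForStatement9
end TwoEventDiD

/-- Lemma 2, propensity-score equivalence: `A ⊆ {W=1}` and the
two-event and combined-event propensity scores coincide a.s. on `A`. -/
theorem propensity_score_equivalence
    {Ω : Type*} [MeasurableSpace Ω] (μ : Measure Ω) [IsProbabilityMeasure μ]
    (T : ℕ) (hT : 2 ≤ T)
    (G1 G2 : Ω → ℕ∞)
    (hG1mem : ∀ ω, InCohort T (G1 ω)) (hG2mem : ∀ ω, InCohort T (G2 ω))
    (hmG1 : ∀ g : ℕ∞, MeasurableSet {ω | G1 ω = g})
    (hmG2 : ∀ g : ℕ∞, MeasurableSet {ω | G2 ω = g})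
    {K : ℕ} (X : Ω → Fin K → ℝ) (hX : Measurable X)
    (g1 g2 : ℕ∞) (hg1 : InCohort T g1) (hg2 : InCohort T g2)
    (g : ℕ) (hg : (g : ℕ∞) = min g1 g2)
    (t : ℕ) (hgt : g ≤ t) (htT : t ≤ T)
    (hW : 0 < μ (Wset G1 G2 g1 g2 g))
    (hA : 0 < μ (evA G1 G2 g1 g2 t))
    (hACS : 0 < (μ[|Wset G1 G2 g1 g2 g]) (evACS G1 G2 g t)) :
    evA G1 G2 g1 g2 t ⊆ Wset G1 G2 g1 g2 g ∧
    ∃ h1 h2 : (Fin K → ℝ) → ℝ, Measurable h1 ∧ Measurable h2 ∧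
      (fun ω => h1 (X ω))
        =ᵐ[(μ[|Wset G1 G2 g1 g2 g])[|evACS G1 G2 g t]]
        ((μ[|Wset G1 G2 g1 g2 g])[|evACS G1 G2 g t])[
          Set.indicator {ω | min (G1 ω) (G2 ω) = (g : ℕ∞)} (fun _ => (1 : ℝ)) | mX X] ∧
      (fun ω => h2 (X ω))
        =ᵐ[μ[|evA G1 G2 g1 g2 t]]
        (μ[|evA G1 G2 g1 g2 t])[
          Set.indicator {ω | G1 ω = g1 ∧ G2 ω = g2} (fun _ => (1 : ℝ)) | mX X] ∧
      ∀ᵐ ω ∂μ, ω ∈ evA G1 G2 g1 g2 t → h1 (X ω) = h2 (X ω) := by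
  classical
  have hgle : (g : ℕ∞) ≤ (t : ℕ∞) := by exact_mod_cast hgt
  -- measurability of the relevant sets
  have hmW : MeasurableSet (Wset G1 G2 g1 g2 g) :=
    measSet2 hmG1 hmG2 (fun a b => min a b ≠ (g : ℕ∞) ∨ (a = g1 ∧ b = g2))
  have hmA : MeasurableSet (evA G1 G2 g1 g2 t) :=
    measSet2 hmG1 hmG2 (fun a b => (a = g1 ∧ b = g2) ∨ (¬ min a b ≤ (t : ℕ∞) ∧ ¬(a = g1 ∧ b = g2)))
  have hmACS : MeasurableSet (evACS G1 G2 g t) :=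
    measSet2 hmG1 hmG2 (fun a b => min a b = (g : ℕ∞) ∨ (¬ min a b ≤ (t : ℕ∞) ∧ min a b ≠ (g : ℕ∞)))
  -- A ⊆ W
  have hsub : evA G1 G2 g1 g2 t ⊆ Wset G1 G2 g1 g2 g := by
    intro ω hω
    simp only [evA, Set.mem_setOf_eq] at hω
    simp only [Wset, Set.mem_setOf_eq]
    rcases hω with hc | ⟨hnt, _⟩
    · exact Or.inr hc
    · exact Or.inl (fun hmin => hnt (by rw [hmin]; exact hgle))
  -- on W, {G = g} coincides with the cohort event
  have hiff : ∀ ω ∈ Wset G1 G2 g1 g2 g,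
      (min (G1 ω) (G2 ω) = (g : ℕ∞) ↔ (G1 ω = g1 ∧ G2 ω = g2)) := by
    intro ω hw
    simp only [Wset, Set.mem_setOf_eq] at hw
    constructor
    · intro hmin
      rcases hw with hne | hc
      · exact absurd hmin hne
      · exact hc
    · intro hc; rw [hc.1, hc.2]; exact hg.symm
  -- W ∩ A^CS = A
  have hWinter : Wset G1 G2 g1 g2 g ∩ evACS G1 G2 g t = evA G1 G2 g1 g2 t := by
    ext ω
    simp only [Wset, evACS, evA, Set.mem_inter_iff, Set.mem_setOf_eq]
    constructor
    · rintro ⟨hw, hacs⟩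
      rcases hacs with hmin | ⟨hnt, hne⟩
      · rcases hw with hne | hc
        · exact absurd hmin hne
        · exact Or.inl hc
      · refine Or.inr ⟨hnt, fun hc => hne ?_⟩
        rw [hc.1, hc.2]; exact hg.symm
    · rintro (hc | ⟨hnt, hnc⟩)
      · have hmin : min (G1 ω) (G2 ω) = (g : ℕ∞) := by rw [hc.1, hc.2]; exact hg.symm
        exact ⟨Or.inr hc, Or.inl hmin⟩
      · have hne : min (G1 ω) (G2 ω) ≠ (g : ℕ∞) :=
          fun hmin => hnt (by rw [hmin]; exact hgle)
        exact ⟨Or.inl hne, Or.inr ⟨hnt, hne⟩⟩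
  -- the two conditional measures coincide
  have hmeas_eq : (μ[|Wset G1 G2 g1 g2 g])[|evACS G1 G2 g t] = μ[|evA G1 G2 g1 g2 t] := by
    rw [cond_cond_eq_cond_inter hmW hmACS μ, hWinter]
  -- the two indicators coincide a.e. under μ[|A]
  have hind : (Set.indicator {ω | min (G1 ω) (G2 ω) = (g : ℕ∞)} (fun _ => (1 : ℝ)))
      =ᵐ[μ[|evA G1 G2 g1 g2 t]]
      (Set.indicator {ω | G1 ω = g1 ∧ G2 ω = g2} (fun _ => (1 : ℝ))) := by
    have h1 : ∀ᵐ ω ∂(μ.restrict (evA G1 G2 g1 g2 t)),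
        Set.indicator {ω | min (G1 ω) (G2 ω) = (g : ℕ∞)} (fun _ => (1 : ℝ)) ω
          = Set.indicator {ω | G1 ω = g1 ∧ G2 ω = g2} (fun _ => (1 : ℝ)) ω := by
      refine (ae_restrict_iff' hmA).2 (ae_of_all _ fun ω hω => ?_)
      have hw := hsub hω
      by_cases hmin : min (G1 ω) (G2 ω) = (g : ℕ∞)
      · have hm1 : ω ∈ {ω | min (G1 ω) (G2 ω) = (g : ℕ∞)} := hmin
        have hm2 : ω ∈ {ω | G1 ω = g1 ∧ G2 ω = g2} := (hiff ω hw).1 hmin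
        rw [Set.indicator_of_mem hm1, Set.indicator_of_mem hm2]
      · have hm1 : ω ∉ {ω | min (G1 ω) (G2 ω) = (g : ℕ∞)} := hmin
        have hm2 : ω ∉ {ω | G1 ω = g1 ∧ G2 ω = g2} :=
          fun hc => hmin ((hiff ω hw).2 hc)
        rw [Set.indicator_of_notMem hm1, Set.indicator_of_notMem hm2]
    exact MeasureTheory.Measure.ae_smul_measure h1 _
  have hcd := condExp_congr_ae (m := mX X) hind
  obtain ⟨h, hhm, hfac⟩ := factor_stronglyMeasurable X
    (stronglyMeasurable_condExp (m := mX X) (μ := μ[|evA G1 G2 g1 g2 t])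
      (f := Set.indicator {ω | G1 ω = g1 ∧ G2 ω = g2} (fun _ => (1 : ℝ))))
  have hfacE : (fun ω => h (X ω)) =ᵐ[μ[|evA G1 G2 g1 g2 t]]
      (μ[|evA G1 G2 g1 g2 t])[
        Set.indicator {ω | G1 ω = g1 ∧ G2 ω = g2} (fun _ => (1 : ℝ)) | mX X] :=
    ae_of_all _ fun ω => (hfac ω).symm
  refine ⟨hsub, h, h, hhm, hhm, ?_, hfacE, ae_of_all _ fun ω _ => rfl⟩
  rw [hmeas_eq]
  exact hfacE.trans hcd.symm
end
end

section
/- Let g¹, g² ∈ {2,…,T} ∪ {∞} with g := min(g¹,g²) finite, and let t with g ≤ t ≤ T; assume P(W=1) > 0 and that p(X) < 1 and p^CS(X) < 1 almost surely. Define the inverse-probability weights w := p(X)·(1−D_t)·1{(G¹,G²) ≠ (g¹,g²)} / (1−p(X)) and w^CS := p^CS(X)·(1−D_t)·1{G≠g} / (1−p^CS(X)). Then w = 0 P-almost surely on {W=0}, and (for versions of p and p^CS that agree as in the propensity-score equivalence) w^CS = w P-almost surely on {W=1}; consequently E_{P_W}[w^CS] · P(W=1) = E[w]. -/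
/- Two-event staggered Difference-in-Differences setup (Callaway–Sant'Anna with a
confounding event).  Cohorts take values in `{2,…,T} ∪ {∞} ⊆ ℕ∞`; the potential-outcome
index `0 : ℕ∞` codes "never treated by that event". -/

open MeasureTheory ProbabilityTheory

noncomputable section

open TwoEventDiD

/-- Lemma 2, weight equivalence: the two-event IPW weight vanishes off
`{W=1}`, agrees with the combined-event weight on `{W=1}`, and their expectations match. -/
theorem ipw_weight_equivalence
    {Ω : Type*} [MeasurableSpace Ω] (μ : Measure Ω) [IsProbabilityMeasure μ]
    (T : ℕ) (hT : 2 ≤ T)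
    (G1 G2 : Ω → ℕ∞)
    (hG1mem : ∀ ω, InCohort T (G1 ω)) (hG2mem : ∀ ω, InCohort T (G2 ω))
    (hmG1 : ∀ g : ℕ∞, MeasurableSet {ω | G1 ω = g})
    (hmG2 : ∀ g : ℕ∞, MeasurableSet {ω | G2 ω = g})
    {K : ℕ} (X : Ω → Fin K → ℝ) (hX : Measurable X)
    (g1 g2 : ℕ∞) (hg1 : InCohort T g1) (hg2 : InCohort T g2)
    (g : ℕ) (hg : (g : ℕ∞) = min g1 g2)
    (t : ℕ) (hgt : g ≤ t) (htT : t ≤ T)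
    (hW : 0 < μ (Wset G1 G2 g1 g2 g))
    -- chosen versions of the two propensity scores, agreeing a.s. on `A`
    (hp hpCS : (Fin K → ℝ) → ℝ) (hpm : Measurable hp) (hpCSm : Measurable hpCS)
    (hpver : (fun ω => hp (X ω))
      =ᵐ[μ[|evA G1 G2 g1 g2 t]]
      (μ[|evA G1 G2 g1 g2 t])[
        Set.indicator {ω | G1 ω = g1 ∧ G2 ω = g2} (fun _ => (1 : ℝ)) | mX X])
    (hpCSver : (fun ω => hpCS (X ω))
      =ᵐ[(μ[|Wset G1 G2 g1 g2 g])[|evACS G1 G2 g t]]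
      ((μ[|Wset G1 G2 g1 g2 g])[|evACS G1 G2 g t])[
        Set.indicator {ω | min (G1 ω) (G2 ω) = (g : ℕ∞)} (fun _ => (1 : ℝ)) | mX X])
    (hagree : ∀ᵐ ω ∂μ, ω ∈ evA G1 G2 g1 g2 t → hpCS (X ω) = hp (X ω))
    -- `p(X) < 1` and `p^CS(X) < 1` almost surely
    (hlt : ∀ᵐ ω ∂μ, hp (X ω) < 1) (hltCS : ∀ᵐ ω ∂μ, hpCS (X ω) < 1) :
    (∀ᵐ ω ∂μ, ω ∉ Wset G1 G2 g1 g2 g → ipw X hp (evComp G1 G2 g1 g2 t) ω = 0) ∧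
    (∀ᵐ ω ∂μ, ω ∈ Wset G1 G2 g1 g2 g →
      ipw X hpCS (evCompCS G1 G2 g t) ω = ipw X hp (evComp G1 G2 g1 g2 t) ω) ∧
    (∫ ω, ipw X hpCS (evCompCS G1 G2 g t) ω ∂(μ[|Wset G1 G2 g1 g2 g]))
        * (μ (Wset G1 G2 g1 g2 g)).toReal
      = ∫ ω, ipw X hp (evComp G1 G2 g1 g2 t) ω ∂μ := by
  have hgle : (g : ℕ∞) ≤ (t : ℕ∞) := by exact_mod_cast hgt
  -- weight vanishes off `W`, pointwise
  have hzero : ∀ ω, ω ∉ Wset G1 G2 g1 g2 g → ipw X hp (evComp G1 G2 g1 g2 t) ω = 0 := by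
    intro ω hω
    have hω' : min (G1 ω) (G2 ω) = (g : ℕ∞) ∧ ¬(G1 ω = g1 ∧ G2 ω = g2) := by
      simp only [Wset, Set.mem_setOf_eq, not_or, not_not, ne_eq] at hω
      exact hω
    have hnot : ω ∉ evComp G1 G2 g1 g2 t := by
      intro hmem
      exact hmem.1 (hω'.1 ▸ hgle)
    simp [ipw, Set.indicator_of_notMem hnot]
  -- weights agree a.s. on `W`
  have heqW : ∀ᵐ ω ∂μ, ω ∈ Wset G1 G2 g1 g2 g →
      ipw X hpCS (evCompCS G1 G2 g t) ω = ipw X hp (evComp G1 G2 g1 g2 t) ω := by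
    filter_upwards [hagree] with ω hag hωW
    by_cases hmem : ω ∈ evComp G1 G2 g1 g2 t
    · have hA : ω ∈ evA G1 G2 g1 g2 t := Or.inr hmem
      have hcs : ω ∈ evCompCS G1 G2 g t := by
        refine ⟨hmem.1, ?_⟩
        intro hmin
        rcases hωW with h | h
        · exact h hmin
        · exact hmem.2 h
      simp only [ipw, hag hA, Set.indicator_of_mem hmem, Set.indicator_of_mem hcs]
    · have hnle : min (G1 ω) (G2 ω) ≤ (t : ℕ∞) := by
        by_contra hle
        refine hmem ⟨hle, fun hgg => ?_⟩
        exact hle (by rw [hgg.1, hgg.2, ← hg]; exact hgle)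
      have hcs : ω ∉ evCompCS G1 G2 g t := fun h => h.1 hnle
      simp [ipw, Set.indicator_of_notMem hmem, Set.indicator_of_notMem hcs]
  refine ⟨Filter.Eventually.of_forall hzero, heqW, ?_⟩
  -- measurability of `W`
  have hminm : MeasurableSet {ω | min (G1 ω) (G2 ω) = (g : ℕ∞)} := by
    have hset : {ω | min (G1 ω) (G2 ω) = (g : ℕ∞)} =
        ⋃ p : ℕ∞ × ℕ∞, ⋃ _ : min p.1 p.2 = (g : ℕ∞),
          ({ω | G1 ω = p.1} ∩ {ω | G2 ω = p.2}) := by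
      ext ω
      simp only [Set.mem_iUnion, Set.mem_inter_iff, Set.mem_setOf_eq]
      constructor
      · intro h; exact ⟨(G1 ω, G2 ω), h, rfl, rfl⟩
      · rintro ⟨p, hp', h1, h2⟩; rw [h1, h2]; exact hp'
    rw [hset]
    exact MeasurableSet.iUnion fun p => MeasurableSet.iUnion fun _ =>
      (hmG1 p.1).inter (hmG2 p.2)
  have hWm : MeasurableSet (Wset G1 G2 g1 g2 g) := by
    have hset : Wset G1 G2 g1 g2 g =
        {ω | min (G1 ω) (G2 ω) = (g : ℕ∞)}ᶜ ∪ ({ω | G1 ω = g1} ∩ {ω | G2 ω = g2}) := by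
      ext ω
      simp [Wset, Set.mem_union, Set.mem_compl_iff, Set.mem_inter_iff]
    rw [hset]
    exact hminm.compl.union ((hmG1 g1).inter (hmG2 g2))
  have hWne : μ (Wset G1 G2 g1 g2 g) ≠ 0 := hW.ne'
  have hWfin : μ (Wset G1 G2 g1 g2 g) ≠ ⊤ := measure_ne_top μ _
  -- the two weights agree a.e. under the conditional measure
  have hae : (fun ω => ipw X hpCS (evCompCS G1 G2 g t) ω)
      =ᵐ[μ[|Wset G1 G2 g1 g2 g]] fun ω => ipw X hp (evComp G1 G2 g1 g2 t) ω := by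
    rw [ProbabilityTheory.cond]
    apply Measure.ae_smul_measure
    filter_upwards [ae_restrict_of_ae heqW, ae_restrict_mem hWm] with ω h1 h2
    exact h1 h2
  rw [integral_congr_ae hae]
  rw [ProbabilityTheory.cond, integral_smul_measure]
  have hrestrict : ∫ ω in Wset G1 G2 g1 g2 g, ipw X hp (evComp G1 G2 g1 g2 t) ω ∂μ
      = ∫ ω, ipw X hp (evComp G1 G2 g1 g2 t) ω ∂μ := by
    rw [← integral_indicator hWm]
    congr 1
    funext ω
    by_cases hω : ω ∈ Wset G1 G2 g1 g2 g
    · simp [Set.indicator_of_mem hω]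
    · simp [Set.indicator_of_notMem hω, hzero ω hω]
  rw [hrestrict, smul_eq_mul, ENNReal.toReal_inv, inv_mul_eq_div, div_mul_eq_mul_div,
    mul_div_assoc, div_self (ENNReal.toReal_ne_zero.mpr ⟨hWne, hWfin⟩), mul_one]
end
end

section
/- Let g¹, g² ∈ {2,…,T} ∪ {∞} with g := min(g¹,g²) finite, and let t with g ≤ t ≤ T; assume P(W=1) > 0 and P(D_t=0, G¹≠g¹, G²≠g²) > 0, and that the realized outcomes Y_t, Y_{g−1} are integrable. Then the outcome control functions coincide: there are versions of m^CS(X) := E_{P_W}[Y_t − Y_{g−1} | X, D_t=0, G≠g] and m(X) := E[Y_t − Y_{g−1} | X, D_t=0, G¹≠g¹, G²≠g²] that are equal P-almost surely on the event {D_t=0, G¹≠g¹, G²≠g²}. -/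
/- Two-event staggered Difference-in-Differences setup (Callaway–Sant'Anna with a
confounding event).  Cohorts take values in `{2,…,T} ∪ {∞} ⊆ ℕ∞`; the potential-outcome
index `0 : ℕ∞` codes "never treated by that event". -/

open MeasureTheory ProbabilityTheory

noncomputable section

open TwoEventDiD

/-! Once the cohort has started by time `t`, i.e. `g ≤ t`, not being treated by `t` already
forces `G ≠ g` and `(G¹, G²) ≠ (g¹, g²)`, so the two comparison events are the same event
`{D_t = 0}`; moreover it lies inside `{W = 1}`, so conditioning `P_W` on it is conditioning
`P` on it. The two control functions are therefore conditional expectations of the same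
variable under the same measure, and any Doob–Dynkin factorisation of that conditional
expectation through `X` serves as both. -/

namespace ProbabilityTheory

variable {Ω : Type*} [MeasurableSpace Ω] {μ : Measure Ω} {s t : Set Ω}

theorem cond_cond_eq_cond_of_subset (hts : t ⊆ s) (hs : μ s ≠ ⊤) : μ[|s][|t] = μ[|t] := by
  rcases eq_or_ne (μ s) 0 with hs₀ | hs₀
  · have ht₀ : μ t = 0 := measure_mono_null hts hs₀
    simp [cond_eq_zero_of_meas_eq_zero hs₀, cond_eq_zero_of_meas_eq_zero ht₀]
  · have hs_inv₀ : (μ s)⁻¹ ≠ 0 := ENNReal.inv_ne_zero.2 hs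
    have hs_inv_top : (μ s)⁻¹ ≠ ⊤ := ENNReal.inv_ne_top.2 hs₀
    simp only [cond, Measure.smul_apply, Measure.restrict_eq_self μ hts, Measure.restrict_smul,
      Measure.restrict_restrict_of_subset hts, smul_smul, smul_eq_mul]
    rw [ENNReal.mul_inv (Or.inl hs_inv₀) (Or.inl hs_inv_top), inv_inv, mul_right_comm,
      ENNReal.mul_inv_cancel hs₀ hs, one_mul]

end ProbabilityTheory

namespace MeasureTheory

theorem exists_stronglyMeasurable_comp_eq_condExp {Ω β F : Type*} [MeasurableSpace Ω]
    [mβ : MeasurableSpace β] [NormedAddCommGroup F] [NormedSpace ℝ F] [CompleteSpace F]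
    (μ : Measure Ω) (X : Ω → β) (f : Ω → F) :
    ∃ h : β → F, StronglyMeasurable h ∧ h ∘ X = μ[f | mβ.comap X] :=
  let ⟨h, hh, hcomp⟩ := (stronglyMeasurable_condExp (m := mβ.comap X) (μ := μ)
    (f := f)).exists_eq_measurable_comp
  ⟨h, hh, hcomp.symm⟩

end MeasureTheory

namespace TwoEventDiD

variable {Ω : Type*} {G1 G2 : Ω → ℕ∞} {g1 g2 : ℕ∞} {g t : ℕ}

theorem evCompCS_subset_Wset : evCompCS G1 G2 g t ⊆ Wset G1 G2 g1 g2 g :=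
  fun _ hω => Or.inl hω.2

theorem evCompCS_eq_evComp (hg : (g : ℕ∞) = min g1 g2) (hgt : g ≤ t) :
    evCompCS G1 G2 g t = evComp G1 G2 g1 g2 t := by
  have hgt' : (g : ℕ∞) ≤ t := by exact_mod_cast hgt
  ext ω
  simp only [evCompCS, evComp, Set.mem_ofPred_eq, and_congr_right_iff]
  intro huntreated
  constructor
  · rintro - ⟨rfl, rfl⟩
    exact huntreated (hg ▸ hgt')
  · rintro - hmin
    exact huntreated (hmin ▸ hgt')

end TwoEventDiD

theorem control_function_equivalence_general
    {Ω : Type*} [MeasurableSpace Ω] (μ : Measure Ω) [IsProbabilityMeasure μ]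
    (G1 G2 : Ω → ℕ∞) (Y : ℕ → ℕ∞ → ℕ∞ → Ω → ℝ)
    {K : ℕ} (X : Ω → Fin K → ℝ)
    (g1 g2 : ℕ∞)
    (g : ℕ) (hg : (g : ℕ∞) = min g1 g2)
    (t : ℕ) (hgt : g ≤ t) :
    ∃ h1 h2 : (Fin K → ℝ) → ℝ, Measurable h1 ∧ Measurable h2 ∧
      (fun ω => h1 (X ω))
        =ᵐ[(μ[|Wset G1 G2 g1 g2 g])[|evCompCS G1 G2 g t]]
        ((μ[|Wset G1 G2 g1 g2 g])[|evCompCS G1 G2 g t])[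
          fun ω => Yr G1 G2 Y t ω - Yr G1 G2 Y (g - 1) ω | mX X] ∧
      (fun ω => h2 (X ω))
        =ᵐ[μ[|evComp G1 G2 g1 g2 t]]
        (μ[|evComp G1 G2 g1 g2 t])[
          fun ω => Yr G1 G2 Y t ω - Yr G1 G2 Y (g - 1) ω | mX X] ∧
      ∀ᵐ ω ∂μ, ω ∈ evComp G1 G2 g1 g2 t → h1 (X ω) = h2 (X ω) := by
  have hsame_measure :
      (μ[|Wset G1 G2 g1 g2 g])[|evCompCS G1 G2 g t] = μ[|evComp G1 G2 g1 g2 t] := by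
    rw [cond_cond_eq_cond_of_subset evCompCS_subset_Wset (measure_ne_top μ _),
      evCompCS_eq_evComp hg hgt]
  obtain ⟨h, hmeas, hversion⟩ := exists_stronglyMeasurable_comp_eq_condExp
    (μ[|evComp G1 G2 g1 g2 t]) X fun ω => Yr G1 G2 Y t ω - Yr G1 G2 Y (g - 1) ω
  refine ⟨h, h, hmeas.measurable, hmeas.measurable, ?_, ?_, ae_of_all _ fun _ _ => rfl⟩
  · rw [hsame_measure]
    exact hversion.eventuallyEq
  · exact hversion.eventuallyEq

/-- Lemma 2, outcome-regression equivalence: the two-event and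
combined-event outcome control functions coincide a.s. on the comparison event. -/
theorem control_function_equivalence
    {Ω : Type*} [MeasurableSpace Ω] (μ : Measure Ω) [IsProbabilityMeasure μ]
    (T : ℕ) (hT : 2 ≤ T)
    (G1 G2 : Ω → ℕ∞) (Y : ℕ → ℕ∞ → ℕ∞ → Ω → ℝ)
    (hG1mem : ∀ ω, InCohort T (G1 ω)) (hG2mem : ∀ ω, InCohort T (G2 ω))
    (hmG1 : ∀ g : ℕ∞, MeasurableSet {ω | G1 ω = g})
    (hmG2 : ∀ g : ℕ∞, MeasurableSet {ω | G2 ω = g})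
    (hYint : ∀ (t : ℕ) (g1 g2 : ℕ∞), Integrable (Y t g1 g2) μ)
    (hYtop1 : ∀ (t : ℕ) (g2 : ℕ∞), Y t ⊤ g2 = Y t 0 g2)
    (hYtop2 : ∀ (t : ℕ) (g1 : ℕ∞), Y t g1 ⊤ = Y t g1 0)
    {K : ℕ} (X : Ω → Fin K → ℝ) (hX : Measurable X)
    (g1 g2 : ℕ∞) (hg1 : InCohort T g1) (hg2 : InCohort T g2)
    (g : ℕ) (hg : (g : ℕ∞) = min g1 g2)
    (t : ℕ) (hgt : g ≤ t) (htT : t ≤ T)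
    (hW : 0 < μ (Wset G1 G2 g1 g2 g))
    (hYrt : Integrable (Yr G1 G2 Y t) μ)
    (hYrb : Integrable (Yr G1 G2 Y (g - 1)) μ)
    (hB : 0 < μ (evComp G1 G2 g1 g2 t)) :
    ∃ h1 h2 : (Fin K → ℝ) → ℝ, Measurable h1 ∧ Measurable h2 ∧
      (fun ω => h1 (X ω))
        =ᵐ[(μ[|Wset G1 G2 g1 g2 g])[|evCompCS G1 G2 g t]]
        ((μ[|Wset G1 G2 g1 g2 g])[|evCompCS G1 G2 g t])[
          fun ω => Yr G1 G2 Y t ω - Yr G1 G2 Y (g - 1) ω | mX X] ∧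
      (fun ω => h2 (X ω))
        =ᵐ[μ[|evComp G1 G2 g1 g2 t]]
        (μ[|evComp G1 G2 g1 g2 t])[
          fun ω => Yr G1 G2 Y t ω - Yr G1 G2 Y (g - 1) ω | mX X] ∧
      ∀ᵐ ω ∂μ, ω ∈ evComp G1 G2 g1 g2 t → h1 (X ω) = h2 (X ω) :=
  control_function_equivalence_general μ G1 G2 Y X g1 g2 g hg t hgt
end
end
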